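/- arXiv:2311.08366 — 9 statements merged into one kernel-verified Lean document; each statement's English description precedes it below -/
import Mathlib

section
/- Let A be an n×n real matrix, B an m×m real matrix, C an n×m real matrix, and s ∈ ℝ. Then the matrix exponential of s times the (n+m)×(n+m) block matrix with blocks (−A, C; 0, −B) equals the block matrix whose top-left block is exp(−sA), whose top-right block is exp(−sA)·(∫₀ˢ exp(uA)·C·exp(−uB) du), whose bottom-left block is 0, and whose bottom-right block is exp(−sB). -/
/-!
Write the block matrix as `D + N` with `D = diag(-A, -B)` and `N` the off-diagonal block `C`.
In the interaction picture `K u = exp (-uD) N exp (uD)` all products `K t * K u` vanish, since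
`N * exp (rD) * N = 0`; hence the Dyson series of `exp (s(D + N))` stops after its first-order
term, `exp (s(D + N)) = exp (sD) (1 + ∫₀ˢ K)`. This identity is proved by checking that the
right-hand side solves `F' = (D + N) F`, `F 0 = 1`, whose only solution is `exp (t(D + N))`.
-/

open NormedSpace Matrix

namespace NormedSpace

variable {𝔸 : Type*} [NormedRing 𝔸] [NormedAlgebra ℚ 𝔸] [CompleteSpace 𝔸]

theorem exp_mul_exp_neg (x : 𝔸) : exp x * exp (-x) = 1 := by
  rw [← exp_add_of_commute (Commute.refl x).neg_right, add_neg_cancel, exp_zero]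

variable [NormedAlgebra ℝ 𝔸]

theorem eq_exp_smul_mul_of_hasDerivAt {F : ℝ → 𝔸} {M : 𝔸}
    (hF : ∀ t, HasDerivAt F (M * F t) t) (s : ℝ) : F s = exp (s • M) * F 0 := by
  have hderiv : ∀ t, HasDerivAt (fun u => exp (-(u • M)) * F u) 0 t := by
    intro t
    have hexp : HasDerivAt (fun u : ℝ => exp (-(u • M))) (-M * exp (-(t • M))) t := by
      simpa only [smul_neg] using hasDerivAt_exp_smul_const' (-M) t
    refine (hexp.mul (hF t)).congr_deriv ?_
    rw [← mul_assoc, ← ((Commute.refl M).smul_right t).neg_right.exp_right.eq, neg_mul,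
      neg_mul, neg_add_cancel]
  have hconst := is_const_of_deriv_eq_zero (fun u => (hderiv u).differentiableAt)
    (fun u => (hderiv u).deriv) s 0
  calc F s = exp (s • M) * (exp (-(s • M)) * F s) := by
        rw [← mul_assoc, exp_mul_exp_neg, one_mul]
    _ = exp (s • M) * F 0 := by simp [hconst]

theorem exp_smul_add_of_mul_exp_smul_mul_eq_zero (D N : 𝔸)
    (hN : ∀ r : ℝ, N * exp (r • D) * N = 0) (s : ℝ) :
    exp (s • (D + N)) =
      exp (s • D) * (1 + ∫ u in (0 : ℝ)..s, exp (-(u • D)) * N * exp (u • D)) := by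
  set K : ℝ → 𝔸 := fun u => exp (-(u • D)) * N * exp (u • D) with hK
  have hKcont : Continuous K := by fun_prop
  have hKK (t u : ℝ) : K t * K u = 0 := by
    have hexp : exp (t • D) * exp (-(u • D)) = exp ((t - u) • D) := by
      rw [← exp_add_of_commute (((Commute.refl D).smul_left t).smul_right u).neg_right, sub_smul,
        sub_eq_add_neg]
    calc K t * K u
        = exp (-(t • D)) * (N * (exp (t • D) * exp (-(u • D))) * N) * exp (u • D) := by
          simp only [hK, mul_assoc]
      _ = 0 := by rw [hexp, hN, mul_zero, zero_mul]
  have hNexp (t : ℝ) : N * exp (t • D) = exp (t • D) * K t := by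
    simp only [hK, ← mul_assoc, exp_mul_exp_neg, one_mul]
  have hKI (t : ℝ) : K t * ∫ u in (0 : ℝ)..t, K u = 0 := by
    have := (ContinuousLinearMap.mul ℝ 𝔸 (K t)).intervalIntegral_comp_comm
      (hKcont.intervalIntegrable (μ := MeasureTheory.volume) 0 t)
    simp only [ContinuousLinearMap.mul_apply', hKK, intervalIntegral.integral_zero] at this
    exact this.symm
  have hG (t : ℝ) : HasDerivAt (fun t => exp (t • D) * (1 + ∫ u in (0 : ℝ)..t, K u))
      ((D + N) * (exp (t • D) * (1 + ∫ u in (0 : ℝ)..t, K u))) t := by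
    refine ((hasDerivAt_exp_smul_const' D t).mul
      ((intervalIntegral.integral_hasDerivAt_right (hKcont.intervalIntegrable 0 t)
        (hKcont.stronglyMeasurableAtFilter _ _) hKcont.continuousAt).const_add 1)).congr_deriv ?_
    rw [add_mul, ← mul_assoc N, hNexp, mul_assoc (exp (t • D)) (K t), mul_add (K t), hKI,
      mul_one, add_zero, mul_assoc]
  simpa using (eq_exp_smul_mul_of_hasDerivAt hG s).symm

end NormedSpace

namespace Matrix

variable {ι n m : Type*} [Fintype ι] [Fintype n] [Fintype m]
  [DecidableEq ι] [DecidableEq n] [DecidableEq m]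

def fromBlocksDiagonalRingHom (α : Type*) [Semiring α] :
    Matrix n n α × Matrix m m α →+* Matrix (n ⊕ m) (n ⊕ m) α where
  toFun P := fromBlocks P.1 0 0 P.2
  map_one' := fromBlocks_one
  map_mul' P Q := by simp [fromBlocks_multiply]
  map_zero' := fromBlocks_zero
  map_add' P Q := by simp [fromBlocks_add]

theorem exp_fromBlocks_diagonal (P : Matrix n n ℝ) (Q : Matrix m m ℝ) :
    exp (fromBlocks P 0 0 Q) = fromBlocks (exp P) 0 0 (exp Q) := by
  have hcont : Continuous (fromBlocksDiagonalRingHom (n := n) (m := m) ℝ) :=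
    continuous_fst.matrix_fromBlocks continuous_const continuous_const continuous_snd
  open scoped Norms.Operator in
  have := (map_exp _ hcont (P, Q)).symm
  simp only [fromBlocksDiagonalRingHom, RingHom.coe_mk, MonoidHom.coe_mk, OneHom.coe_mk,
    Prod.fst_exp, Prod.snd_exp] at this
  exact this

/-- Matrices carry no global norm, so here the integral is taken entrywise. -/
theorem exp_smul_add_of_mul_exp_smul_mul_eq_zero (D N : Matrix ι ι ℝ)
    (hN : ∀ r : ℝ, N * exp (r • D) * N = 0) (s : ℝ) :
    exp (s • (D + N)) = exp (s • D) *
      (1 + of fun i j => ∫ u in (0 : ℝ)..s, (exp (-(u • D)) * N * exp (u • D)) i j) := by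
  open scoped Norms.Operator in
  have hK : Continuous fun u : ℝ => exp (-(u • D)) * N * exp (u • D) := by fun_prop
  have hint : ∫ u in (0 : ℝ)..s, exp (-(u • D)) * N * exp (u • D) =
      of fun i j => ∫ u in (0 : ℝ)..s, (exp (-(u • D)) * N * exp (u • D)) i j :=
    ext fun i j =>
      ((LinearMap.toContinuousLinearMap (entryLinearMap ℝ ℝ i j)).intervalIntegral_comp_comm
        (hK.intervalIntegrable (μ := MeasureTheory.volume) 0 s)).symm
  exact (NormedSpace.exp_smul_add_of_mul_exp_smul_mul_eq_zero D N hN s).trans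
    (congrArg _ (congrArg _ hint))

end Matrix

/-- For an `n×n` matrix `A`, an `m×m` matrix `B`, an `n×m` matrix `C` and
`s : ℝ`, the matrix exponential of `s` times the block matrix `(-A, C; 0, -B)` is the block
matrix with blocks `exp (-sA)`, `exp (-sA) * ∫₀ˢ exp (uA) C exp (-uB) du`, `0`, `exp (-sB)`,
where the integral is taken entrywise. -/
theorem matrix_exp_block_triangular_integral_upper
    (n m : ℕ) (A : Matrix (Fin n) (Fin n) ℝ) (B : Matrix (Fin m) (Fin m) ℝ)
    (C : Matrix (Fin n) (Fin m) ℝ) (s : ℝ) :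
    NormedSpace.exp (s • Matrix.fromBlocks (-A) C 0 (-B)) =
      Matrix.fromBlocks
        (NormedSpace.exp (-(s • A)))
        (NormedSpace.exp (-(s • A)) *
          Matrix.of (fun i j =>
            ∫ u in (0:ℝ)..s,
              (NormedSpace.exp (u • A) * C * NormedSpace.exp (-(u • B))) i j))
        0
        (NormedSpace.exp (-(s • B))) := by
  set D := fromBlocks (-A) 0 0 (-B)
  set N := fromBlocks 0 C 0 (0 : Matrix (Fin m) (Fin m) ℝ)
  have hDN : fromBlocks (-A) C 0 (-B) = D + N := by simp [D, N, fromBlocks_add]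
  have hexpD (r : ℝ) : exp (r • D) = fromBlocks (exp (-(r • A))) 0 0 (exp (-(r • B))) := by
    simp only [D, fromBlocks_smul, smul_zero, smul_neg]
    exact exp_fromBlocks_diagonal _ _
  have hN (r : ℝ) : N * exp (r • D) * N = 0 := by simp [hexpD, N, fromBlocks_multiply]
  have hK (u : ℝ) : exp (-(u • D)) * N * exp (u • D) =
      fromBlocks 0 (exp (u • A) * C * exp (-(u • B))) 0 0 := by
    rw [← neg_smul, hexpD, hexpD]
    simp [N, fromBlocks_multiply]
  have hint : (of fun i j => ∫ u in (0 : ℝ)..s, (exp (-(u • D)) * N * exp (u • D)) i j) =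
      fromBlocks 0
        (of fun i j => ∫ u in (0 : ℝ)..s, (exp (u • A) * C * exp (-(u • B))) i j) 0 0 := by
    ext (i | i) (j | j) <;> simp [hK]
  rw [hDN, exp_smul_add_of_mul_exp_smul_mul_eq_zero D N hN, hint, hexpD, ← fromBlocks_one,
    fromBlocks_add, fromBlocks_multiply]
  simp
end

section
/- Let A be an r×r real matrix, B a q×q real matrix, C an r×q real matrix, and s ∈ ℝ. Then the matrix exponential of s times the (q+r)×(q+r) block matrix with blocks (B, 0; C, A) equals the block matrix whose top-left block is exp(sB), whose top-right block is 0, whose bottom-left block is (∫₀ˢ exp(uA)·C·exp(−uB) du)·exp(sB), and whose bottom-right block is exp(sA). -/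
/-!
Write `M = D + N` with `D = diag(B, A)` and `N = (0, 0; C, 0)`. The candidate
`F t = (1 + ∫₀ᵗ e^{uD} N e^{-uD} du) e^{tD}` satisfies `F' = F (D + N)` as soon as
`N e^{vD} N = 0` for all `v`, which holds here because `e^{vD}` is block diagonal; since also
`F 0 = 1`, `F t = e^{tM}` by uniqueness for this linear ODE. Reading off blocks gives the formula.
-/

open scoped Matrix
open NormedSpace

section BanachAlgebra

variable {𝔸 : Type*} [NormedRing 𝔸] [NormedAlgebra ℝ 𝔸] [CompleteSpace 𝔸]

theorem exp_add_smul (a b : ℝ) (x : 𝔸) : exp ((a + b) • x) = exp (a • x) * exp (b • x) := by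
  let +nondep : NormedAlgebra ℚ 𝔸 := .restrictScalars ℚ ℝ 𝔸
  rw [add_smul, exp_add_of_commute ((Commute.refl x).smul_left a |>.smul_right b)]

theorem exp_neg_smul_mul_exp_smul (t : ℝ) (x : 𝔸) : exp (-(t • x)) * exp (t • x) = 1 := by
  rw [← neg_smul, ← exp_add_smul, neg_add_cancel, zero_smul, exp_zero]

theorem eq_exp_smul_of_hasDerivAt_mul {F : ℝ → 𝔸} {M : 𝔸}
    (hF : ∀ t, HasDerivAt F (F t * M) t) (hF₀ : F 0 = 1) (t : ℝ) : F t = exp (t • M) := by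
  have hderiv : ∀ u, HasDerivAt (fun u => F u * exp ((-u) • M)) 0 u := fun u =>
    ((hF u).mul ((hasDerivAt_exp_smul_const' M (-u)).scomp u (hasDerivAt_neg u))).congr_deriv
      (by simp only [Function.comp_apply, neg_one_smul, mul_neg, mul_assoc, add_neg_cancel])
  have hconst : F t * exp ((-t) • M) = 1 := by
    simpa [hF₀] using is_const_of_deriv_eq_zero (fun u => (hderiv u).differentiableAt)
      (fun u => (hderiv u).deriv) t 0
  calc F t = F t * exp ((-t) • M) * exp (t • M) := by
        rw [mul_assoc, neg_smul, exp_neg_smul_mul_exp_smul, mul_one]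
    _ = exp (t • M) := by rw [hconst, one_mul]

/-- The first-order Dyson expansion of `exp (t • (D + N))` is exact when `N e^{vD} N = 0`. -/
theorem exp_smul_add_of_mul_exp_smul_mul_eq_zero {D N : 𝔸}
    (hN : ∀ v : ℝ, N * exp (v • D) * N = 0) (t : ℝ) :
    exp (t • (D + N)) =
      (1 + ∫ u in (0:ℝ)..t, exp (u • D) * N * exp (-(u • D))) * exp (t • D) := by
  set G : ℝ → 𝔸 := fun u => exp (u • D) * N * exp (-(u • D))
  set K : ℝ → 𝔸 := fun t => ∫ u in (0:ℝ)..t, G u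
  have hG : Continuous G := by
    let +nondep : NormedAlgebra ℚ 𝔸 := .restrictScalars ℚ ℝ 𝔸
    fun_prop
  have hGE : ∀ t : ℝ, G t * exp (t • D) = exp (t • D) * N := fun t => by
    simp only [G, mul_assoc, exp_neg_smul_mul_exp_smul, mul_one]
  have hGEN : ∀ t u : ℝ, G u * (exp (t • D) * N) = 0 := fun t u => by
    have hexp : exp (-(u • D)) * exp (t • D) = exp ((t - u) • D) := by
      rw [← neg_smul, ← exp_add_smul, neg_add_eq_sub]
    calc G u * (exp (t • D) * N) = exp (u • D) * (N * exp ((t - u) • D) * N) := by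
          simp only [G, ← hexp, mul_assoc]
      _ = 0 := by rw [hN, mul_zero]
  have hKEN : ∀ t : ℝ, K t * exp (t • D) * N = 0 := fun t => by
    have h := ((ContinuousLinearMap.mul ℝ 𝔸).flip (exp (t • D) * N)).intervalIntegral_comp_comm
      (μ := MeasureTheory.volume) (hG.intervalIntegrable 0 t)
    simp only [ContinuousLinearMap.flip_apply, ContinuousLinearMap.mul_apply', hGEN,
      intervalIntegral.integral_zero] at h
    rw [mul_assoc]
    exact h.symm
  refine (eq_exp_smul_of_hasDerivAt_mul (F := fun t => (1 + K t) * exp (t • D))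
    (fun t => ?_) (by simp [K]) t).symm
  have hK : HasDerivAt K (G t) t := (hG.integral_hasStrictDerivAt 0 t).hasDerivAt
  refine (((hasDerivAt_const t 1).add hK).mul (hasDerivAt_exp_smul_const D t)).congr_deriv ?_
  simp only [Pi.add_apply, zero_add, hGE, mul_add, add_mul, one_mul, hKEN, add_zero]
  simp only [mul_assoc]
  abel

end BanachAlgebra

namespace Matrix

def fromBlocksDiagAlgHom (R : Type*) (m n : Type*) [CommSemiring R] [Fintype m] [Fintype n]
    [DecidableEq m] [DecidableEq n] :
    Matrix m m R × Matrix n n R →ₐ[R] Matrix (m ⊕ n) (m ⊕ n) R where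
  toFun X := fromBlocks X.1 0 0 X.2
  map_one' := fromBlocks_one
  map_mul' X Y := by simp [fromBlocks_multiply]
  map_zero' := fromBlocks_zero
  map_add' X Y := by simp [fromBlocks_add]
  commutes' c := by simp [Algebra.algebraMap_eq_smul_one, ← fromBlocks_one, fromBlocks_smul]

attribute [local instance] Matrix.linftyOpNormedAddCommGroup Matrix.linftyOpNormedSpace
  Matrix.linftyOpNormedRing Matrix.linftyOpNormedAlgebra

variable {m n : Type*} [Fintype m] [Fintype n]

theorem intervalIntegral_apply {f : ℝ → Matrix m n ℝ} {a b : ℝ} (hf : Continuous f)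
    (i : m) (j : n) : (∫ u in a..b, f u) i j = ∫ u in a..b, f u i j :=
  ((entryLinearMap ℝ ℝ i j).toContinuousLinearMap.intervalIntegral_comp_comm
    (hf.intervalIntegrable a b)).symm

variable [DecidableEq m] [DecidableEq n]

theorem exp_fromBlocks_zero_zero (X : Matrix m m ℝ) (Y : Matrix n n ℝ) :
    exp (fromBlocks X 0 0 Y) = fromBlocks (exp X) 0 0 (exp Y) := by
  have h := map_exp (fromBlocksDiagAlgHom ℝ m n)
    (continuous_fst.matrix_fromBlocks continuous_const continuous_const continuous_snd) (X, Y)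
  exact h.symm.trans (congrArg₂ (fromBlocks · 0 0 ·) (Prod.fst_exp (X, Y)) (Prod.snd_exp (X, Y)))

end Matrix

section
attribute [local instance] Matrix.linftyOpNormedAddCommGroup Matrix.linftyOpNormedSpace
  Matrix.linftyOpNormedRing Matrix.linftyOpNormedAlgebra

open Matrix in
/-- For an `r×r` matrix `A`, a `q×q` matrix `B`, an `r×q` matrix `C` and
`s : ℝ`, the matrix exponential of `s` times the `(q+r)×(q+r)` block matrix `(B, 0; C, A)` is
the block matrix with blocks `exp (sB)`, `0`, `(∫₀ˢ exp (uA) C exp (-uB) du) * exp (sB)`,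
`exp (sA)`, where the integral is taken entrywise. -/
theorem matrix_exp_block_triangular_integral_lower
    (r q : ℕ) (A : Matrix (Fin r) (Fin r) ℝ) (B : Matrix (Fin q) (Fin q) ℝ)
    (C : Matrix (Fin r) (Fin q) ℝ) (s : ℝ) :
    NormedSpace.exp (s • Matrix.fromBlocks B 0 C A) =
      Matrix.fromBlocks
        (NormedSpace.exp (s • B))
        0
        ((Matrix.of (fun i j =>
            ∫ u in (0:ℝ)..s,
              (NormedSpace.exp (u • A) * C * NormedSpace.exp (-(u • B))) i j)) *
          NormedSpace.exp (s • B))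
        (NormedSpace.exp (s • A)) := by
  set D := fromBlocks B 0 0 A
  set N : Matrix (Fin q ⊕ Fin r) (Fin q ⊕ Fin r) ℝ := fromBlocks 0 0 C 0
  have hexp : ∀ u : ℝ, exp (u • D) = fromBlocks (exp (u • B)) 0 0 (exp (u • A)) := fun u => by
    simp only [D, fromBlocks_smul, smul_zero, exp_fromBlocks_zero_zero]
  have hN : ∀ v : ℝ, N * exp (v • D) * N = 0 := fun v => by
    simp [hexp, N, fromBlocks_multiply]
  have hconj : ∀ u : ℝ, exp (u • D) * N * exp (-(u • D)) =
      fromBlocks 0 0 (exp (u • A) * C * exp (-(u • B))) 0 := fun u => by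
    simp [← neg_smul, hexp, N, fromBlocks_multiply]
  have hintegral : ∫ u in (0:ℝ)..s, exp (u • D) * N * exp (-(u • D)) =
      fromBlocks 0 0 (of fun i j => ∫ u in (0:ℝ)..s, (exp (u • A) * C * exp (-(u • B))) i j) 0 := by
    ext i j
    rw [Matrix.intervalIntegral_apply (by fun_prop)]
    rcases i with i | i <;> rcases j with j | j <;> simp [hconj]
  -- restated so that `exp` uses `Matrix`'s own topology, not the `linftyOp` norm's
  have hdyson : exp (s • (D + N)) =
      (1 + ∫ u in (0:ℝ)..s, exp (u • D) * N * exp (-(u • D))) * exp (s • D) :=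
    exp_smul_add_of_mul_exp_smul_mul_eq_zero hN s
  rw [show fromBlocks B 0 C A = D + N by simp [D, N, fromBlocks_add], hdyson, hintegral, hexp,
    ← fromBlocks_one, fromBlocks_add, fromBlocks_multiply]
  simp
end
end

section
/- Fix natural numbers n, m, p and let φ be the (n+p)×(n+m) real block matrix with the n×n identity in the top-left block and zeros elsewhere. For every (n+m)×(n+p) real matrix Z and every s ∈ ℝ, the series exp_*(sZ) := ∑_{k=1}^∞ (sZ)·(φ·sZ)^{k−1}/k! converges absolutely (the family of terms is summable), and for all s, t ∈ ℝ one has exp_*(sZ) ∗ exp_*(tZ) = exp_*((s+t)Z), where a ∗ b := a + b + a·φ·b. In particular t ↦ exp_*(tZ) is a one-parameter subgroup for the group operation ∗. -/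
open scoped Matrix

/-- The structural matrix `φ : Mat_{(n+p)×(n+m)}(ℝ)` with the `n×n` identity in the
top-left block and zeros elsewhere. -/
noncomputable def structPhi (n m p : ℕ) : Matrix (Fin n ⊕ Fin p) (Fin n ⊕ Fin m) ℝ :=
  Matrix.fromBlocks 1 0 0 0

/-- The `∗`-product `a ∗ b := a + b + a·φ·b` on `(n+m)×(n+p)` real matrices. -/
noncomputable def starMul (n m p : ℕ)
    (a b : Matrix (Fin n ⊕ Fin m) (Fin n ⊕ Fin p) ℝ) :
    Matrix (Fin n ⊕ Fin m) (Fin n ⊕ Fin p) ℝ :=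
  a + b + a * structPhi n m p * b

/-- The `∗`-exponential `exp_*(Z) := ∑_{k=1}^∞ Z·(φ·Z)^{k-1}/k!`
(here reindexed as a sum over `k : ℕ` of `Z·(φ·Z)^k/(k+1)!`). -/
noncomputable def starExp (n m p : ℕ)
    (Z : Matrix (Fin n ⊕ Fin m) (Fin n ⊕ Fin p) ℝ) :
    Matrix (Fin n ⊕ Fin m) (Fin n ⊕ Fin p) ℝ :=
  ∑' k : ℕ, ((Nat.factorial (k + 1) : ℝ))⁻¹ • (Z * (structPhi n m p * Z) ^ k)

/-!
With `M W := [[0, W], [0, φ W]]` one has `M a * M b = M (a φ b)`, so `X ↦ 1 + M X` turns the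
product `a ∗ b = a + b + a φ b` into matrix multiplication. Comparing power series,
`(M W) ^ (k + 1) = M (W (φ W) ^ k)` gives `exp (M W) = 1 + M (exp_* W)`. Since `M (s Z) = s • M Z`,
the law `exp_*(sZ) ∗ exp_*(tZ) = exp_*((s+t)Z)` is `exp (s • M Z) * exp (t • M Z) = exp ((s + t) • M Z)`
read through the injective map `M`.
-/

open Matrix

section StarBlock

variable {α β : Type*} [Fintype α]

noncomputable def starBlock (φ : Matrix β α ℝ) : Matrix α β ℝ →ₗ[ℝ] Matrix (α ⊕ β) (α ⊕ β) ℝ where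
  toFun W := fromBlocks 0 W 0 (φ * W)
  map_add' a b := by simp [fromBlocks_add, Matrix.mul_add]
  map_smul' c a := by simp [fromBlocks_smul]

theorem starBlock_injective (φ : Matrix β α ℝ) : Function.Injective (starBlock φ) :=
  fun _ _ h => (fromBlocks_inj.1 h).2.1

variable [Fintype β]

theorem starBlock_mul_starBlock (φ : Matrix β α ℝ) (a b : Matrix α β ℝ) :
    starBlock φ a * starBlock φ b = starBlock φ (a * φ * b) := by
  simp [starBlock, fromBlocks_multiply, Matrix.mul_assoc]

variable [DecidableEq α] [DecidableEq β]

noncomputable def starExpSeries (φ : Matrix β α ℝ) (W : Matrix α β ℝ) (k : ℕ) : Matrix α β ℝ :=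
  (Nat.factorial (k + 1) : ℝ)⁻¹ • (W * (φ * W) ^ k)

theorem one_add_starBlock_mul_one_add_starBlock (φ : Matrix β α ℝ) (a b : Matrix α β ℝ) :
    (1 + starBlock φ a) * (1 + starBlock φ b) = 1 + starBlock φ (a + b + a * φ * b) := by
  rw [map_add, map_add, ← starBlock_mul_starBlock]
  noncomm_ring

theorem starBlock_pow_succ (φ : Matrix β α ℝ) (W : Matrix α β ℝ) (k : ℕ) :
    starBlock φ W ^ (k + 1) = starBlock φ (W * (φ * W) ^ k) := by
  induction k with
  | zero => simp
  | succ k ih =>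
    rw [pow_succ, ih, starBlock_mul_starBlock, pow_succ, Matrix.mul_assoc, Matrix.mul_assoc]

theorem inv_factorial_smul_starBlock_pow_succ (φ : Matrix β α ℝ) (W : Matrix α β ℝ) (k : ℕ) :
    (Nat.factorial (k + 1) : ℝ)⁻¹ • starBlock φ W ^ (k + 1) = starBlock φ (starExpSeries φ W k) := by
  rw [starBlock_pow_succ, starExpSeries, map_smul]

-- The operator norm only makes the exponential series summable; its topology is the entrywise one.
open scoped Norms.Operator in
theorem hasSum_starBlock_starExpSeries (φ : Matrix β α ℝ) (W : Matrix α β ℝ) :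
    HasSum (fun k => starBlock φ (starExpSeries φ W k)) (NormedSpace.exp (starBlock φ W) - 1) := by
  have h := (hasSum_nat_add_iff' 1).2 (NormedSpace.exp_series_hasSum_exp' (𝕂 := ℝ) (starBlock φ W))
  simp only [inv_factorial_smul_starBlock_pow_succ, Finset.range_one, Finset.sum_singleton,
    Nat.factorial_zero, Nat.cast_one, inv_one, pow_zero, one_smul] at h
  exact h

theorem summable_starExpSeries (φ : Matrix β α ℝ) (W : Matrix α β ℝ) :
    Summable (starExpSeries φ W) := by
  have h := (hasSum_starBlock_starExpSeries φ W).summable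
  refine Pi.summable.2 fun i => Pi.summable.2 fun j => ?_
  simpa [starBlock] using Pi.summable.1 (Pi.summable.1 h (Sum.inl i)) (Sum.inr j)

theorem exp_starBlock (φ : Matrix β α ℝ) (W : Matrix α β ℝ) :
    NormedSpace.exp (starBlock φ W) = 1 + starBlock φ (∑' k, starExpSeries φ W k) := by
  have h := (summable_starExpSeries φ W).hasSum.map (starBlock φ)
    (starBlock φ).continuous_of_finiteDimensional
  rw [← sub_eq_iff_eq_add']
  exact (hasSum_starBlock_starExpSeries φ W).unique h

end StarBlock

/-- The series defining `exp_*(sZ)` converges absolutely (the family of its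
terms is summable), and `s ↦ exp_*(sZ)` is a one-parameter subgroup for the group operation
`a ∗ b = a + b + a·φ·b`: `exp_*(sZ) ∗ exp_*(tZ) = exp_*((s+t)Z)`. -/
theorem starExp_summable_and_one_parameter_subgroup
    (n m p : ℕ) (Z : Matrix (Fin n ⊕ Fin m) (Fin n ⊕ Fin p) ℝ) :
    (∀ s : ℝ, Summable fun k : ℕ =>
        ((Nat.factorial (k + 1) : ℝ))⁻¹ • ((s • Z) * (structPhi n m p * (s • Z)) ^ k)) ∧
    (∀ s t : ℝ,
        starMul n m p (starExp n m p (s • Z)) (starExp n m p (t • Z)) =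
          starExp n m p ((s + t) • Z)) := by
  refine ⟨fun s => summable_starExpSeries _ (s • Z), fun s t => ?_⟩
  set M := starBlock (structPhi n m p)
  have hcomm : Commute (M (s • Z)) (M (t • Z)) := by
    simp only [map_smul]
    exact ((Commute.refl _).smul_left s).smul_right t
  have h := Matrix.exp_add_of_commute _ _ hcomm
  rw [← map_add, ← add_smul, exp_starBlock, exp_starBlock, exp_starBlock,
    one_add_starBlock_mul_one_add_starBlock] at h
  exact (starBlock_injective _ (add_left_cancel h)).symm
end

section
/- Fix natural numbers n, m, p, let φ be the (n+p)×(n+m) real block matrix with the n×n identity in the top-left block and zeros elsewhere, and let Z be the (n+m)×(n+p) real block matrix with blocks (R, S; T, U), where R is n×n, S is n×p, T is m×n and U is m×p. Then the matrix series ∑_{k≥1} R^{k−1}/k! and ∑_{k≥2} R^{k−2}/k! converge absolutely and exp_*(Z) equals the block matrix with blocks (exp(R) − 1, (∑_{k≥1} R^{k−1}/k!)·S; T·(∑_{k≥1} R^{k−1}/k!), U + T·(∑_{k≥2} R^{k−2}/k!)·S), where exp is the usual matrix exponential. -/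
open scoped Matrix

/-! `φ Z` factors as `ι (R S)` through the inclusion `ι` of the first `n` coordinates, and
`(R S) ι = R`; hence `Z (φ Z)^(k+1) = (R; T) R^k (R S)` and, summing,
`exp_*(Z) = Z + (R; T) φ₂(R) (R S)` with `φⱼ(R) = ∑ₖ Rᵏ / (k + j)!`. The blocks then follow from
`exp R = 1 + R φ₁(R)` and `φ₁(R) = 1 + R φ₂(R) = 1 + φ₂(R) R`. -/

open NormedSpace Matrix
open scoped Nat

section ExpPhi

variable {𝕂 𝔸 : Type*} [Field 𝕂] [Ring 𝔸] [Algebra 𝕂 𝔸] [TopologicalSpace 𝔸]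

variable (𝕂) in
/-- The `φ`-functions of exponential integrators. -/
noncomputable def expPhi (j : ℕ) (x : 𝔸) : 𝔸 :=
  ∑' k : ℕ, ((k + j)! : 𝕂)⁻¹ • x ^ k

variable [IsTopologicalRing 𝔸]

theorem expPhi_zero [CharZero 𝕂] (x : 𝔸) : expPhi 𝕂 0 x = exp x := by
  simp [expPhi, exp_eq_tsum 𝕂]

variable [T2Space 𝔸]

theorem commute_expPhi (j : ℕ) (x : 𝔸) : Commute x (expPhi 𝕂 j x) :=
  Commute.tsum_right x fun k => ((Commute.refl x).pow_right k).smul_right _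

theorem expPhi_eq_add_mul {j : ℕ} {x : 𝔸}
    (h : Summable fun k : ℕ => ((k + (j + 1))! : 𝕂)⁻¹ • x ^ k) :
    expPhi 𝕂 j x = (j ! : 𝕂)⁻¹ • 1 + x * expPhi 𝕂 (j + 1) x := by
  have hshift : HasSum (fun k : ℕ => ((k + 1 + j)! : 𝕂)⁻¹ • x ^ (k + 1))
      (x * expPhi 𝕂 (j + 1) x) := by
    have hterm : ∀ k : ℕ, x * (((k + (j + 1))! : 𝕂)⁻¹ • x ^ k) =
        ((k + 1 + j)! : 𝕂)⁻¹ • x ^ (k + 1) := fun k => by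
      rw [mul_smul_comm, pow_succ', add_right_comm, add_assoc]
    simpa only [hterm, expPhi] using h.hasSum.mul_left x
  rw [expPhi, (hshift.zero_add (f := fun k : ℕ => ((k + j)! : 𝕂)⁻¹ • x ^ k)).tsum_eq]
  simp

theorem expPhi_eq_add_mul' {j : ℕ} {x : 𝔸}
    (h : Summable fun k : ℕ => ((k + (j + 1))! : 𝕂)⁻¹ • x ^ k) :
    expPhi 𝕂 j x = (j ! : 𝕂)⁻¹ • 1 + expPhi 𝕂 (j + 1) x * x := by
  rw [expPhi_eq_add_mul h, commute_expPhi]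

end ExpPhi

theorem summable_inv_factorial_add_smul_pow {𝕂 𝔸 : Type*} [RCLike 𝕂] [NormedRing 𝔸]
    [NormedAlgebra 𝕂 𝔸] [CompleteSpace 𝔸] (j : ℕ) (x : 𝔸) :
    Summable fun k : ℕ => ((k + j)! : 𝕂)⁻¹ • x ^ k := by
  refine (norm_expSeries_summable' (𝕂 := 𝕂) x).of_norm_bounded fun k => ?_
  rw [norm_smul, norm_smul]
  gcongr
  simp only [norm_inv, RCLike.norm_natCast]
  exact inv_anti₀ (by positivity) (by exact_mod_cast Nat.factorial_le (Nat.le_add_right k j))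

theorem Matrix.summable_inv_factorial_add_smul_pow {𝕂 ι : Type*} [RCLike 𝕂] [Fintype ι]
    [DecidableEq ι] (j : ℕ) (R : Matrix ι ι 𝕂) :
    Summable fun k : ℕ => ((k + j)! : 𝕂)⁻¹ • R ^ k := by
  let _ := Matrix.linftyOpNormedRing (n := ι) (α := 𝕂)
  let _ := Matrix.linftyOpNormedAlgebra (n := ι) (R := 𝕂) (α := 𝕂)
  exact @_root_.summable_inv_factorial_add_smul_pow 𝕂 _ _ _ _
    (FiniteDimensional.complete 𝕂 _) j R

section Blocks

variable {l n o q α : Type*} [Fintype n] [Fintype q]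

theorem HasSum.matrix_mul_mul {ι : Type*} [NonUnitalNonAssocSemiring α] [TopologicalSpace α]
    [IsTopologicalSemiring α] {f : ι → Matrix n q α} {a : Matrix n q α} (hf : HasSum f a)
    (X : Matrix l n α) (Y : Matrix q o α) : HasSum (fun i => X * f i * Y) (X * a * Y) := by
  let g : Matrix n q α →+ Matrix l o α :=
    { toFun := fun M => X * M * Y
      map_zero' := by simp
      map_add' := fun M N => by simp [Matrix.mul_add, Matrix.add_mul] }
  exact hf.map g (continuous_const.matrix_mul continuous_id |>.matrix_mul continuous_const)

theorem Matrix.mul_pow_succ [Semiring α] [DecidableEq n] [DecidableEq q]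
    (A : Matrix n q α) (B : Matrix q n α) (k : ℕ) :
    (A * B) ^ (k + 1) = A * (B * A) ^ k * B := by
  induction k with
  | zero => simp
  | succ k ih => rw [pow_succ, ih, pow_succ]; simp only [Matrix.mul_assoc]

theorem Matrix.fromBlocks_add_fromRows_mul_fromCols [Semiring α] {m p : Type*}
    (R : Matrix n n α) (S : Matrix n p α) (T : Matrix m n α) (U : Matrix m p α)
    (G : Matrix n n α) :
    fromBlocks R S T U + fromRows R T * G * fromCols R S =
      fromBlocks (R + R * G * R) (S + R * G * S) (T + T * G * R) (U + T * G * S) := by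
  rw [fromRows_mul, fromRows_mul_fromCols, fromBlocks_add]

end Blocks

section StarExp

variable {n m p : ℕ} (R : Matrix (Fin n) (Fin n) ℝ) (S : Matrix (Fin n) (Fin p) ℝ)
  (T : Matrix (Fin m) (Fin n) ℝ) (U : Matrix (Fin m) (Fin p) ℝ)

theorem structPhi_eq_fromRows_mul_fromCols :
    structPhi n m p =
      fromRows (1 : Matrix (Fin n) (Fin n) ℝ) 0 * fromCols 1 (0 : Matrix (Fin n) (Fin m) ℝ) := by
  rw [fromRows_mul_fromCols]
  simp [structPhi]

theorem structPhi_mul_fromBlocks :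
    structPhi n m p * fromBlocks R S T U =
      fromRows (1 : Matrix (Fin n) (Fin n) ℝ) (0 : Matrix (Fin p) (Fin n) ℝ) * fromCols R S := by
  rw [structPhi_eq_fromRows_mul_fromCols, Matrix.mul_assoc, fromCols_mul_fromBlocks]
  simp

theorem fromBlocks_mul_structPhi_mul_pow_succ (k : ℕ) :
    fromBlocks R S T U * (structPhi n m p * fromBlocks R S T U) ^ (k + 1) =
      fromRows R T * R ^ k * fromCols R S := by
  have hleft : fromBlocks R S T U *
      fromRows (1 : Matrix (Fin n) (Fin n) ℝ) (0 : Matrix (Fin p) (Fin n) ℝ) = fromRows R T := by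
    simp [fromBlocks_mul_fromRows]
  have hcorner : fromCols R S *
      fromRows (1 : Matrix (Fin n) (Fin n) ℝ) (0 : Matrix (Fin p) (Fin n) ℝ) = R := by
    simp [fromCols_mul_fromRows]
  rw [structPhi_mul_fromBlocks, Matrix.mul_pow_succ]
  simp only [← Matrix.mul_assoc, hleft, hcorner]

theorem starExp_fromBlocks :
    starExp n m p (fromBlocks R S T U) =
      fromBlocks R S T U + fromRows R T * expPhi ℝ 2 R * fromCols R S := by
  have hshift : HasSum
      (fun k : ℕ => ((k + 2)! : ℝ)⁻¹ •
        (fromBlocks R S T U * (structPhi n m p * fromBlocks R S T U) ^ (k + 1)))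
      (fromRows R T * expPhi ℝ 2 R * fromCols R S) := by
    simpa only [fromBlocks_mul_structPhi_mul_pow_succ, Matrix.mul_smul, Matrix.smul_mul,
      expPhi] using
      (Matrix.summable_inv_factorial_add_smul_pow 2 R).hasSum.matrix_mul_mul (fromRows R T)
        (fromCols R S)
  rw [starExp, hshift.zero_add.tsum_eq]
  simp

end StarExp

/-- The series `∑_{k≥1} R^{k-1}/k!` and `∑_{k≥2} R^{k-2}/k!` converge
absolutely, and for `Z = (R, S; T, U)` the `∗`-exponential `exp_*(Z)` equals the block
matrix `(exp R - 1, (∑_{k≥1} R^{k-1}/k!)·S; T·(∑_{k≥1} R^{k-1}/k!),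
U + T·(∑_{k≥2} R^{k-2}/k!)·S)`, where `exp` is the usual matrix exponential.
(The sums over `k ≥ 1` and `k ≥ 2` are reindexed as sums over `k : ℕ` of
`R^k/(k+1)!` and `R^k/(k+2)!` respectively.) -/
theorem starExp_blocks
    (n m p : ℕ) (R : Matrix (Fin n) (Fin n) ℝ) (S : Matrix (Fin n) (Fin p) ℝ)
    (T : Matrix (Fin m) (Fin n) ℝ) (U : Matrix (Fin m) (Fin p) ℝ) :
    (Summable fun k : ℕ => ((Nat.factorial (k + 1) : ℝ))⁻¹ • R ^ k) ∧
    (Summable fun k : ℕ => ((Nat.factorial (k + 2) : ℝ))⁻¹ • R ^ k) ∧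
    starExp n m p (Matrix.fromBlocks R S T U) =
      Matrix.fromBlocks
        (NormedSpace.exp R - 1)
        ((∑' k : ℕ, ((Nat.factorial (k + 1) : ℝ))⁻¹ • R ^ k) * S)
        (T * ∑' k : ℕ, ((Nat.factorial (k + 1) : ℝ))⁻¹ • R ^ k)
        (U + T * (∑' k : ℕ, ((Nat.factorial (k + 2) : ℝ))⁻¹ • R ^ k) * S) := by
  have hF := Matrix.summable_inv_factorial_add_smul_pow (𝕂 := ℝ) 1 R
  have hG := Matrix.summable_inv_factorial_add_smul_pow (𝕂 := ℝ) 2 R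
  refine ⟨hF, hG, ?_⟩
  have hF_left : expPhi ℝ 1 R = 1 + R * expPhi ℝ 2 R := by
    rw [expPhi_eq_add_mul hG]
    simp
  have hF_right : expPhi ℝ 1 R = 1 + expPhi ℝ 2 R * R := by
    rw [expPhi_eq_add_mul' hG]
    simp
  have hexp : exp R - 1 = R + R * expPhi ℝ 2 R * R := by
    rw [← expPhi_zero (𝕂 := ℝ), expPhi_eq_add_mul hF, hF_right]
    simp [mul_add, mul_assoc]
  change _ = fromBlocks _ (expPhi ℝ 1 R * S) (T * expPhi ℝ 1 R) (U + T * expPhi ℝ 2 R * S)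
  rw [starExp_fromBlocks, fromBlocks_add_fromRows_mul_fromCols, hexp]
  congr 1
  · rw [hF_left, Matrix.add_mul, Matrix.one_mul, Matrix.mul_assoc]
  · rw [hF_right, Matrix.mul_add, Matrix.mul_one, Matrix.mul_assoc]
end

section
/- Let X : [0,1]² → ℝ be twice continuously differentiable, satisfy X(s,0) = 0 and X(0,t) = 0 for all s, t ∈ [0,1], and not be identically zero. Then there exist natural numbers a, b such that ∫₀¹ ∫₀¹ s^a t^b ∂_s∂_t X(s,t) ds dt ≠ 0. -/
/-!
Suppose every moment `∫∫ sᵃ tᵇ F` of the continuous function `F = ∂ₛ∂ₜX` vanishes. A continuous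
function on an interval all of whose moments vanish is orthogonal to every polynomial, hence by
Weierstrass to itself, hence zero; applied first to `s ↦ ∫ tᵇ F(s,t) dt` and then to
`t ↦ F(s,t)`, this gives `F = 0` on the unit square. But `∫₀ᵗ∫₀ˢ F = X(s,t) - X(s,0) - X(0,t) +
X(0,0)`, which is `X(s,t)` by the boundary conditions, so `X` would vanish on the square.
-/

open MeasureTheory Set Polynomial

namespace intervalIntegral

variable {f g : ℝ → ℝ} {a b : ℝ}

theorem integral_eval_mul_eq_zero_of_forall_integral_pow_mul_eq_zero
    (hf : IntervalIntegrable f volume a b) (h : ∀ n : ℕ, ∫ x in a..b, x ^ n * f x = 0)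
    (p : ℝ[X]) : ∫ x in a..b, p.eval x * f x = 0 := by
  simp_rw [eval_eq_sum_range, Finset.sum_mul, mul_assoc]
  rw [integral_finsetSum fun i _ =>
    (hf.continuousOn_mul (continuous_pow i).continuousOn).const_mul _]
  simp [integral_const_mul, h]

theorem integral_mul_eq_zero_of_forall_integral_pow_mul_eq_zero (hab : a ≤ b)
    (hf : IntervalIntegrable f volume a b) (h : ∀ n : ℕ, ∫ x in a..b, x ^ n * f x = 0)
    (hg : ContinuousOn g (Icc a b)) : ∫ x in a..b, g x * f x = 0 := by
  rw [← uIcc_of_le hab] at hg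
  set C := ∫ x in a..b, |f x|
  have hC : 0 ≤ C := integral_nonneg hab fun x _ => abs_nonneg (f x)
  refine abs_nonpos_iff.mp (le_of_forall_pos_le_add fun ε hε => ?_)
  obtain ⟨p, hp⟩ := exists_polynomial_near_of_continuousOn a b g (uIcc_of_le hab ▸ hg)
    (ε / (C + 1)) (by positivity)
  have hpf := integral_eval_mul_eq_zero_of_forall_integral_pow_mul_eq_zero hf h p
  have hgp : IntervalIntegrable (fun x => (g x - p.eval x) * f x) volume a b :=
    hf.continuousOn_mul (hg.sub p.continuous.continuousOn)
  calc |∫ x in a..b, g x * f x|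
      = |∫ x in a..b, (g x - p.eval x) * f x| := by
        simp_rw [sub_mul]
        rw [integral_sub (hf.continuousOn_mul hg) (hf.continuousOn_mul p.continuous.continuousOn),
          hpf, sub_zero]
    _ ≤ ∫ x in a..b, |(g x - p.eval x) * f x| := abs_integral_le_integral_abs hab
    _ ≤ ∫ x in a..b, ε / (C + 1) * |f x| := by
        refine integral_mono_on hab hgp.abs (hf.abs.const_mul _) fun x hx => ?_
        rw [abs_mul, abs_sub_comm]
        exact mul_le_mul_of_nonneg_right (hp x hx).le (abs_nonneg _)
    _ = ε / (C + 1) * C := integral_const_mul _ _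
    _ ≤ 0 + ε := by
        rw [zero_add, div_mul_eq_mul_div, div_le_iff₀ (by positivity)]
        nlinarith

theorem eqOn_zero_of_integral_mul_self_eq_zero (hab : a < b) (hf : ContinuousOn f (Icc a b))
    (h : ∫ x in a..b, f x * f x = 0) : EqOn f 0 (Icc a b) := by
  have hff : ContinuousOn (fun x => f x * f x) (Icc a b) := hf.mul hf
  have hae : (fun x => f x * f x) =ᵐ[volume.restrict (Icc a b)] 0 := by
    rw [← Measure.restrict_congr_set Ioc_ae_eq_Icc]
    refine (integral_eq_zero_iff_of_le_of_nonneg_ae hab.le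
      (Filter.Eventually.of_forall fun x => mul_self_nonneg (f x)) ?_).mp h
    exact hff.intervalIntegrable_of_Icc hab.le
  have hsq := Measure.eqOn_of_ae_eq hae hff continuousOn_const
    (by rw [interior_Icc, closure_Ioo hab.ne])
  exact fun x hx => mul_self_eq_zero.mp (hsq hx)

theorem eqOn_zero_of_forall_integral_pow_mul_eq_zero (hab : a < b)
    (hf : ContinuousOn f (Icc a b)) (h : ∀ n : ℕ, ∫ x in a..b, x ^ n * f x = 0) :
    EqOn f 0 (Icc a b) :=
  eqOn_zero_of_integral_mul_self_eq_zero hab hf <|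
    integral_mul_eq_zero_of_forall_integral_pow_mul_eq_zero hab.le
      (hf.intervalIntegrable_of_Icc hab.le) h hf

theorem eqOn_zero_of_forall_integral_integral_pow_mul_pow_mul_eq_zero {F : ℝ × ℝ → ℝ}
    {c d : ℝ} (hab : a < b) (hcd : c < d) (hF : Continuous F)
    (h : ∀ m n : ℕ, ∫ s in a..b, ∫ t in c..d, s ^ m * t ^ n * F (s, t) = 0) :
    EqOn F 0 (Icc a b ×ˢ Icc c d) := by
  have hrow (n : ℕ) : EqOn (fun s => ∫ t in c..d, t ^ n * F (s, t)) 0 (Icc a b) := by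
    refine eqOn_zero_of_forall_integral_pow_mul_eq_zero hab ?_ fun m => ?_
    · exact (continuous_parametric_intervalIntegral_of_continuous' (by fun_prop) c d).continuousOn
    · simpa only [mul_assoc, integral_const_mul] using h m n
  rintro ⟨s, t⟩ ⟨hs, ht⟩
  exact eqOn_zero_of_forall_integral_pow_mul_eq_zero hcd (by fun_prop) (fun n => hrow n hs) ht

end intervalIntegral

section PartialDerivatives

variable {E : Type*} [NormedAddCommGroup E] [NormedSpace ℝ E] {g : ℝ × ℝ → E}

noncomputable def partialFst (g : ℝ × ℝ → E) (p : ℝ × ℝ) : E :=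
  deriv (fun σ => g (σ, p.2)) p.1

noncomputable def partialSnd (g : ℝ × ℝ → E) (p : ℝ × ℝ) : E :=
  deriv (fun τ => g (p.1, τ)) p.2

theorem partialFst_eq_fderiv {p : ℝ × ℝ} (hg : DifferentiableAt ℝ g p) :
    partialFst g p = fderiv ℝ g p (1, 0) :=
  (hg.hasFDerivAt.comp_hasDerivAt p.1 ((hasDerivAt_id p.1).prodMk (hasDerivAt_const p.1 p.2))).deriv

theorem partialSnd_eq_fderiv {p : ℝ × ℝ} (hg : DifferentiableAt ℝ g p) :
    partialSnd g p = fderiv ℝ g p (0, 1) :=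
  (hg.hasFDerivAt.comp_hasDerivAt p.2 ((hasDerivAt_const p.2 p.1).prodMk (hasDerivAt_id p.2))).deriv

theorem DifferentiableAt.hasDerivAt_partialFst {s t : ℝ} (hg : DifferentiableAt ℝ g (s, t)) :
    HasDerivAt (fun σ => g (σ, t)) (partialFst g (s, t)) s :=
  (hg.comp s (differentiableAt_id.prodMk (differentiableAt_const t))).hasDerivAt

theorem DifferentiableAt.hasDerivAt_partialSnd {s t : ℝ} (hg : DifferentiableAt ℝ g (s, t)) :
    HasDerivAt (fun τ => g (s, τ)) (partialSnd g (s, t)) t :=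
  (hg.comp t ((differentiableAt_const s).prodMk differentiableAt_id)).hasDerivAt

theorem ContDiff.partialFst {n : WithTop ℕ∞} (hg : ContDiff ℝ (n + 1) g) :
    ContDiff ℝ n (partialFst g) := by
  have hd : Differentiable ℝ g := hg.differentiable (by simp)
  rw [show _root_.partialFst g = fun p => fderiv ℝ g p (1, 0) from
    funext fun p => partialFst_eq_fderiv (hd p)]
  exact (hg.fderiv_right le_rfl).clm_apply contDiff_const

theorem ContDiff.partialSnd {n : WithTop ℕ∞} (hg : ContDiff ℝ (n + 1) g) :
    ContDiff ℝ n (partialSnd g) := by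
  have hd : Differentiable ℝ g := hg.differentiable (by simp)
  rw [show _root_.partialSnd g = fun p => fderiv ℝ g p (0, 1) from
    funext fun p => partialSnd_eq_fderiv (hd p)]
  exact (hg.fderiv_right le_rfl).clm_apply contDiff_const

variable [CompleteSpace E]

theorem integral_partialFst (hg : ContDiff ℝ 1 g) (a b t : ℝ) :
    ∫ σ in a..b, partialFst g (σ, t) = g (b, t) - g (a, t) := by
  have hd : Differentiable ℝ g := hg.differentiable one_ne_zero
  have hc : Continuous (partialFst g) :=
    (ContDiff.partialFst (n := 0) (by simpa using hg)).continuous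
  exact intervalIntegral.integral_eq_sub_of_hasDerivAt (fun σ _ => (hd _).hasDerivAt_partialFst)
    ((hc.comp (by fun_prop)).intervalIntegrable _ _)

theorem integral_partialSnd (hg : ContDiff ℝ 1 g) (s c d : ℝ) :
    ∫ τ in c..d, partialSnd g (s, τ) = g (s, d) - g (s, c) := by
  have hd : Differentiable ℝ g := hg.differentiable one_ne_zero
  have hc : Continuous (partialSnd g) :=
    (ContDiff.partialSnd (n := 0) (by simpa using hg)).continuous
  exact intervalIntegral.integral_eq_sub_of_hasDerivAt (fun τ _ => (hd _).hasDerivAt_partialSnd)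
    ((hc.comp (by fun_prop)).intervalIntegrable _ _)

theorem integral_integral_partialFst_partialSnd (hg : ContDiff ℝ 2 g) (a b c d : ℝ) :
    ∫ τ in c..d, ∫ σ in a..b, partialFst (partialSnd g) (σ, τ) =
      g (b, d) - g (b, c) - (g (a, d) - g (a, c)) := by
  have hg' : ContDiff ℝ 1 (partialSnd g) := hg.partialSnd
  have hc : Continuous (partialSnd g) := hg'.continuous
  have hi (s : ℝ) : IntervalIntegrable (fun τ => partialSnd g (s, τ)) volume c d :=
    (hc.comp (by fun_prop : Continuous fun τ : ℝ => (s, τ))).intervalIntegrable _ _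
  simp_rw [integral_partialFst hg']
  rw [intervalIntegral.integral_sub (hi b) (hi a), integral_partialSnd (hg.of_le one_le_two),
    integral_partialSnd (hg.of_le one_le_two)]

end PartialDerivatives

/-- If `X : ℝ × ℝ → ℝ` is `C²`, vanishes on the two axes `{t = 0}` and
`{s = 0}` inside the unit square, and is not identically zero on the square, then some
moment `∫₀¹∫₀¹ sᵃ tᵇ ∂ₛ∂ₜX(s,t) ds dt` of the mixed second partial derivative is nonzero. -/
theorem exists_nonzero_polynomial_moment
    (X : ℝ × ℝ → ℝ) (hX : ContDiff ℝ 2 X)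
    (hs0 : ∀ s ∈ Set.Icc (0:ℝ) 1, X (s, 0) = 0)
    (h0t : ∀ t ∈ Set.Icc (0:ℝ) 1, X (0, t) = 0)
    (hne : ∃ s ∈ Set.Icc (0:ℝ) 1, ∃ t ∈ Set.Icc (0:ℝ) 1, X (s, t) ≠ 0) :
    ∃ a b : ℕ,
      (∫ s in (0:ℝ)..1, ∫ t in (0:ℝ)..1,
        s ^ a * t ^ b * deriv (fun σ => deriv (fun τ => X (σ, τ)) t) s) ≠ 0 := by
  -- `hmom` is the moment condition for `partialFst (partialSnd X)`, which unfolds to the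
  -- iterated `deriv` of the statement.
  by_contra! hmom
  have hF : Continuous (partialFst (partialSnd X)) :=
    (ContDiff.partialFst (n := 0) (by simpa using hX.partialSnd)).continuous
  have hF0 := intervalIntegral.eqOn_zero_of_forall_integral_integral_pow_mul_pow_mul_eq_zero
    zero_lt_one zero_lt_one hF hmom
  obtain ⟨s, hs, t, ht, hXst⟩ := hne
  have h01 : (0:ℝ) ∈ Icc 0 1 := ⟨le_rfl, zero_le_one⟩
  have hint : ∫ τ in (0:ℝ)..t, ∫ σ in (0:ℝ)..s, partialFst (partialSnd X) (σ, τ) = 0 := by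
    refine (intervalIntegral.integral_congr fun τ hτ => ?_).trans intervalIntegral.integral_zero
    refine (intervalIntegral.integral_congr fun σ hσ => ?_).trans intervalIntegral.integral_zero
    exact hF0 ⟨uIcc_subset_Icc h01 hs hσ, uIcc_subset_Icc h01 ht hτ⟩
  have hXeq := integral_integral_partialFst_partialSnd hX 0 s 0 t
  rw [hint, hs0 s hs, h0t t ht, h0t 0 h01] at hXeq
  exact hXst (by simpa using hXeq.symm)
end

section
/- Let p ≥ 1 and let X : [0,1]² → ℝ^d be continuous. For every t ∈ [0,1] and every 0 ≤ s < s' ≤ 1, the 1D p-variation of the horizontal path r ↦ X(r,t) over [s,s'] satisfies |X(·,t)|^p_{p;[s,s']} ≤ 2^{p−1}·( |X|^p_{p;[s,s']×[0,1]} + |X(·,0)|^p_{p;[s,s']} ), where |X|_{p;R} is the controlled 2D p-variation of X over the rectangle R (the inequality is understood in the extended nonnegative reals). -/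
open scoped ENNReal

/-- The `p`-th power of the 1D `p`-variation of `x : ℝ → E` over `[s,s']`:
the supremum, over all finite monotone partitions `s = r₀ ≤ r₁ ≤ ... ≤ r_k = s'`, of
`∑ᵢ ‖x(rᵢ₊₁) − x(rᵢ)‖^p`, valued in `ℝ≥0∞`. -/
noncomputable def oneVarPow {E : Type*} [NormedAddCommGroup E]
    (p : ℝ) (x : ℝ → E) (s s' : ℝ) : ℝ≥0∞ :=
  ⨆ (k : ℕ) (r : Fin (k + 1) → ℝ) (_ : Monotone r) (_ : r 0 = s) (_ : r (Fin.last k) = s'),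
    ∑ i : Fin k, (‖x (r i.succ) - x (r i.castSucc)‖₊ : ℝ≥0∞) ^ p

/-- The 1D `p`-variation `|x|_{p;[s,s']}`, i.e. the `1/p`-th power of `oneVarPow`. -/
noncomputable def oneVar {E : Type*} [NormedAddCommGroup E]
    (p : ℝ) (x : ℝ → E) (s s' : ℝ) : ℝ≥0∞ :=
  oneVarPow p x s s' ^ (1 / p)

/-- A closed axis-parallel rectangle `[s,s']×[t,t']` in the plane. -/
structure Rect where
  s : ℝ
  s' : ℝ
  t : ℝ
  t' : ℝ

/-- The subset of the plane determined by a rectangle. -/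
def Rect.toSet (r : Rect) : Set (ℝ × ℝ) := Set.Icc r.s r.s' ×ˢ Set.Icc r.t r.t'

/-- The unit square `[0,1]²`. -/
def unitRect : Rect := ⟨0, 1, 0, 1⟩

/-- The 2D increment `□_R[X] := X(s,t) − X(s',t) − X(s,t') + X(s',t')` of `X` over the
rectangle `R = [s,s']×[t,t']`. -/
def boxInc {E : Type*} [NormedAddCommGroup E] (X : ℝ → ℝ → E) (r : Rect) : E :=
  X r.s r.t - X r.s' r.t - X r.s r.t' + X r.s' r.t'

/-- `π : Fin K → Rect` is a rectangle partition of `R`: a finite collection of closed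
subrectangles with pairwise disjoint interiors whose union is `R`. -/
def IsRectPartition (R : Rect) {K : ℕ} (π : Fin K → Rect) : Prop :=
  (∀ i, (π i).s ≤ (π i).s' ∧ (π i).t ≤ (π i).t') ∧
  (∀ i j, i ≠ j → interior (π i).toSet ∩ interior (π j).toSet = ∅) ∧
  (⋃ i, (π i).toSet) = R.toSet

/-- The `p`-th power of the controlled 2D `p`-variation of `X` over the rectangle `R`:
the supremum over all rectangle partitions `π` of `R` of `∑_{r ∈ π} ‖□_r[X]‖^p`. -/
noncomputable def cVarPow {E : Type*} [NormedAddCommGroup E]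
    (p : ℝ) (X : ℝ → ℝ → E) (R : Rect) : ℝ≥0∞ :=
  ⨆ (K : ℕ) (π : Fin K → Rect) (_ : IsRectPartition R π),
    ∑ i, (‖boxInc X (π i)‖₊ : ℝ≥0∞) ^ p

/-- The controlled 2D `p`-variation `|X|_{p;R}`, i.e. the `1/p`-th power of `cVarPow`. -/
noncomputable def cVar {E : Type*} [NormedAddCommGroup E]
    (p : ℝ) (X : ℝ → ℝ → E) (R : Rect) : ℝ≥0∞ :=
  cVarPow p X R ^ (1 / p)

/-- The `p`-th power of the grid 2D `p`-variation of `X` over the rectangle `R`: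
the supremum over all grid-like partitions of `∑_{i,j} ‖□_{[σᵢ,σᵢ₊₁]×[τⱼ,τⱼ₊₁]}[X]‖^p`. -/
noncomputable def gridVarPow {E : Type*} [NormedAddCommGroup E]
    (p : ℝ) (X : ℝ → ℝ → E) (R : Rect) : ℝ≥0∞ :=
  ⨆ (n : ℕ) (m : ℕ) (σ : Fin (n + 1) → ℝ) (τ : Fin (m + 1) → ℝ)
    (_ : Monotone σ) (_ : Monotone τ)
    (_ : σ 0 = R.s) (_ : σ (Fin.last n) = R.s')
    (_ : τ 0 = R.t) (_ : τ (Fin.last m) = R.t'),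
    ∑ i : Fin n, ∑ j : Fin m,
      (‖boxInc X ⟨σ i.castSucc, σ i.succ, τ j.castSucc, τ j.succ⟩‖₊ : ℝ≥0∞) ^ p

/-- The grid 2D `p`-variation `V_p(X;R)`, i.e. the `1/p`-th power of `gridVarPow`. -/
noncomputable def gridVar {E : Type*} [NormedAddCommGroup E]
    (p : ℝ) (X : ℝ → ℝ → E) (R : Rect) : ℝ≥0∞ :=
  gridVarPow p X R ^ (1 / p)

/-- The supremum norm `sup_{[0,1]²} ‖X‖`, valued in `ℝ≥0∞`. -/
noncomputable def supNormSq {E : Type*} [NormedAddCommGroup E] (X : ℝ → ℝ → E) : ℝ≥0∞ :=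
  ⨆ (s ∈ Set.Icc (0:ℝ) 1) (t ∈ Set.Icc (0:ℝ) 1), (‖X s t‖₊ : ℝ≥0∞)

/-- The controlled `p`-variation norm
`‖X‖_{p-cvar} := sup ‖X‖ + |X(·,0)|_p + |X(0,·)|_p + |X|_{p;[0,1]²}`. -/
noncomputable def cvarNorm {E : Type*} [NormedAddCommGroup E]
    (p : ℝ) (X : ℝ → ℝ → E) : ℝ≥0∞ :=
  supNormSq X + oneVar p (fun s => X s 0) 0 1 + oneVar p (fun t => X 0 t) 0 1 +
    cVar p X unitRect

/-- The `p`-variation norm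
`‖X‖_{p-var} := sup ‖X‖ + |X(·,0)|_p + |X(0,·)|_p + V_p(X;[0,1]²)`. -/
noncomputable def varNorm {E : Type*} [NormedAddCommGroup E]
    (p : ℝ) (X : ℝ → ℝ → E) : ℝ≥0∞ :=
  supNormSq X + oneVar p (fun s => X s 0) 0 1 + oneVar p (fun t => X 0 t) 0 1 +
    gridVar p X unitRect

/-!
Along a partition `s = r₀ ≤ ⋯ ≤ r_k = s'`, each horizontal increment splits as
`X(rᵢ₊₁,t) − X(rᵢ,t) = □_{[rᵢ,rᵢ₊₁]×[0,t]}[X] + (X(rᵢ₊₁,0) − X(rᵢ,0))`, and convexity gives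
`(a + b)^p ≤ 2^{p−1}(a^p + b^p)`. The rectangles `[rᵢ,rᵢ₊₁]×[0,t]` form the bottom row of the
grid partition of `[s,s']×[0,1]` cut at heights `0 ≤ t ≤ 1`, so their `p`-sum is bounded by the
controlled `p`-variation, while the remaining `p`-sum is one of those defining
`|X(·,0)|^p_{p;[s,s']}`.
-/

open Set Function

namespace Fin

variable {α : Type*} [LinearOrder α] {n : ℕ}

lemma exists_castSucc_le_and_le_succ (r : Fin (n + 1) → α) (hn : n ≠ 0) {x : α}
    (hx : x ∈ Icc (r 0) (r (last n))) : ∃ i : Fin n, r i.castSucc ≤ x ∧ x ≤ r i.succ := by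
  by_contra! h
  have below : ∀ i, r i ≤ x := Fin.induction hx.1 fun i hi => (h i hi).le
  obtain ⟨m, rfl⟩ := Nat.exists_eq_succ_of_ne_zero hn
  have := h (last m) (below _)
  rw [succ_last] at this
  exact absurd hx.2 (not_le.2 this)

lemma iUnion_Icc_castSucc_succ {r : Fin (n + 1) → α} (hr : Monotone r) (hn : n ≠ 0) :
    ⋃ i : Fin n, Icc (r i.castSucc) (r i.succ) = Icc (r 0) (r (last n)) := by
  refine Subset.antisymm (iUnion_subset fun i => Icc_subset_Icc (hr (zero_le _))
    (hr (le_last _))) fun x hx => ?_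
  obtain ⟨i, hi⟩ := exists_castSucc_le_and_le_succ r hn hx
  exact mem_iUnion.2 ⟨i, hi⟩

lemma pairwise_disjoint_Ioo_castSucc_succ {r : Fin (n + 1) → α} (hr : Monotone r) :
    Pairwise (Disjoint on fun i : Fin n => Ioo (r i.castSucc) (r i.succ)) := by
  refine (pairwise_disjoint_on _).2 fun i j hij => ?_
  have : r i.succ ≤ r j.castSucc := hr (succ_le_castSucc_iff.2 hij)
  exact disjoint_left.2 fun x hxi hxj => (hxi.2.trans_le this).not_gt hxj.1

end Fin

def gridRect {n m : ℕ} (σ : Fin (n + 1) → ℝ) (τ : Fin (m + 1) → ℝ) (ij : Fin n × Fin m) : Rect :=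
  ⟨σ ij.1.castSucc, σ ij.1.succ, τ ij.2.castSucc, τ ij.2.succ⟩

section Grid

variable {n m : ℕ} {σ : Fin (n + 1) → ℝ} {τ : Fin (m + 1) → ℝ} {R : Rect}

lemma isRectPartition_gridRect (hσ : Monotone σ) (hτ : Monotone τ) (hn : n ≠ 0) (hm : m ≠ 0)
    (hσ₀ : σ 0 = R.s) (hσ₁ : σ (Fin.last n) = R.s') (hτ₀ : τ 0 = R.t)
    (hτ₁ : τ (Fin.last m) = R.t') :
    IsRectPartition R (gridRect σ τ ∘ finProdFinEquiv.symm) := by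
  refine ⟨fun k => ⟨hσ (Fin.castSucc_le_succ _), hτ (Fin.castSucc_le_succ _)⟩,
    fun k l hkl => ?_, ?_⟩
  · obtain ⟨⟨i, j⟩, rfl⟩ := finProdFinEquiv.surjective k
    obtain ⟨⟨i', j'⟩, rfl⟩ := finProdFinEquiv.surjective l
    have hne : i ≠ i' ∨ j ≠ j' := by
      by_contra! h
      exact hkl (by rw [h.1, h.2])
    rw [← disjoint_iff_inter_eq_empty]
    simp only [comp_apply, Equiv.symm_apply_apply, gridRect, Rect.toSet,
      interior_prod_eq, interior_Icc, disjoint_prod]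
    exact hne.imp (fun h => Fin.pairwise_disjoint_Ioo_castSucc_succ hσ h)
      (fun h => Fin.pairwise_disjoint_Ioo_castSucc_succ hτ h)
  · rw [comp_def, finProdFinEquiv.symm.surjective.iUnion_comp
      fun ij => (gridRect σ τ ij).toSet]
    simp only [gridRect, Rect.toSet]
    rw [iUnion_prod (fun i : Fin n => Icc (σ i.castSucc) (σ i.succ))
      (fun j : Fin m => Icc (τ j.castSucc) (τ j.succ)),
      Fin.iUnion_Icc_castSucc_succ hσ hn, Fin.iUnion_Icc_castSucc_succ hτ hm, hσ₀, hσ₁, hτ₀, hτ₁]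

lemma sum_gridRect_le_cVarPow {E : Type*} [NormedAddCommGroup E] (p : ℝ) (X : ℝ → ℝ → E)
    (hσ : Monotone σ) (hτ : Monotone τ)
    (hσ₀ : σ 0 = R.s) (hσ₁ : σ (Fin.last n) = R.s') (hτ₀ : τ 0 = R.t)
    (hτ₁ : τ (Fin.last m) = R.t') :
    ∑ ij, (‖boxInc X (gridRect σ τ ij)‖₊ : ℝ≥0∞) ^ p ≤ cVarPow p X R := by
  rcases eq_or_ne n 0 with rfl | hn
  · simp
  rcases eq_or_ne m 0 with rfl | hm
  · simp
  rw [← finProdFinEquiv.symm.sum_comp]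
  exact le_iSup_of_le (n * m) <| le_iSup_of_le _ <| le_iSup_of_le
    (isRectPartition_gridRect hσ hτ hn hm hσ₀ hσ₁ hτ₀ hτ₁) le_rfl

end Grid

lemma sum_le_oneVarPow {E : Type*} [NormedAddCommGroup E] (p : ℝ) (x : ℝ → E) {k : ℕ}
    {r : Fin (k + 1) → ℝ} (hr : Monotone r) {s s' : ℝ} (hr₀ : r 0 = s)
    (hr₁ : r (Fin.last k) = s') :
    ∑ i : Fin k, (‖x (r i.succ) - x (r i.castSucc)‖₊ : ℝ≥0∞) ^ p ≤ oneVarPow p x s s' :=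
  le_iSup_of_le k <| le_iSup_of_le r <| le_iSup_of_le hr <| le_iSup_of_le hr₀ <|
    le_iSup_of_le hr₁ le_rfl

lemma sub_eq_boxInc_add {E : Type*} [NormedAddCommGroup E] (X : ℝ → ℝ → E) (a b u v : ℝ) :
    X b v - X a v = boxInc X ⟨a, b, u, v⟩ + (X b u - X a u) := by
  simp only [boxInc]
  abel

lemma coe_nnnorm_add_rpow_le {E : Type*} [SeminormedAddCommGroup E] {p : ℝ} (hp : 1 ≤ p)
    (x y : E) :
    (‖x + y‖₊ : ℝ≥0∞) ^ p ≤ 2 ^ (p - 1) * ((‖x‖₊ : ℝ≥0∞) ^ p + (‖y‖₊ : ℝ≥0∞) ^ p) :=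
  calc (‖x + y‖₊ : ℝ≥0∞) ^ p ≤ ((‖x‖₊ : ℝ≥0∞) + ‖y‖₊) ^ p := by
        gcongr
        exact_mod_cast nnnorm_add_le x y
    _ ≤ _ := ENNReal.rpow_add_le_mul_rpow_add_rpow _ _ hp

theorem horizontal_path_variation_le_general
    (d : ℕ) (p : ℝ) (hp : 1 ≤ p)
    (X : ℝ → ℝ → EuclideanSpace ℝ (Fin d))
    (t : ℝ) (ht : t ∈ Set.Icc (0:ℝ) 1)
    (s s' : ℝ) :
    oneVarPow p (fun r => X r t) s s' ≤
      (2 : ℝ≥0∞) ^ (p - 1) *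
        (cVarPow p X ⟨s, s', 0, 1⟩ + oneVarPow p (fun r => X r 0) s s') := by
  refine iSup_le fun k => iSup_le fun r => iSup_le fun hr => iSup_le fun hr₀ =>
    iSup_le fun hr₁ => ?_
  set τ : Fin 3 → ℝ := ![0, t, 1]
  have hτ : Monotone τ :=
    Fin.monotone_iff_le_succ.2 fun j => by fin_cases j <;> simp [τ, ht.1, ht.2]
  have bottom_row : ∑ i : Fin k, (‖boxInc X (gridRect r τ (i, 0))‖₊ : ℝ≥0∞) ^ p ≤
      cVarPow p X ⟨s, s', 0, 1⟩ :=
    calc _ ≤ ∑ ij : Fin k × Fin 2, (‖boxInc X (gridRect r τ ij)‖₊ : ℝ≥0∞) ^ p := by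
          rw [Fintype.sum_prod_type]
          exact Finset.sum_le_sum fun i _ => by simp [Fin.sum_univ_two]
      _ ≤ _ := sum_gridRect_le_cVarPow p X hr hτ hr₀ hr₁ rfl rfl
  calc ∑ i : Fin k, (‖X (r i.succ) t - X (r i.castSucc) t‖₊ : ℝ≥0∞) ^ p
      ≤ ∑ i : Fin k, 2 ^ (p - 1) * ((‖boxInc X (gridRect r τ (i, 0))‖₊ : ℝ≥0∞) ^ p +
          (‖X (r i.succ) 0 - X (r i.castSucc) 0‖₊ : ℝ≥0∞) ^ p) :=
        Finset.sum_le_sum fun i _ => by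
          rw [sub_eq_boxInc_add X _ _ 0 t]
          exact coe_nnnorm_add_rpow_le hp _ _
    _ = 2 ^ (p - 1) * (∑ i : Fin k, (‖boxInc X (gridRect r τ (i, 0))‖₊ : ℝ≥0∞) ^ p +
          ∑ i : Fin k, (‖X (r i.succ) 0 - X (r i.castSucc) 0‖₊ : ℝ≥0∞) ^ p) := by
        rw [← Finset.mul_sum, Finset.sum_add_distrib]
    _ ≤ _ := by
        gcongr
        exact sum_le_oneVarPow p _ hr hr₀ hr₁

/-- For continuous `X : [0,1]² → ℝ^d`, `p ≥ 1`, `t ∈ [0,1]` and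
`0 ≤ s < s' ≤ 1`, the `p`-th power of the 1D `p`-variation of the horizontal path
`r ↦ X(r,t)` over `[s,s']` is at most
`2^{p−1}·(|X|^p_{p;[s,s']×[0,1]} + |X(·,0)|^p_{p;[s,s']})` (in `ℝ≥0∞`). -/
theorem horizontal_path_variation_le
    (d : ℕ) (p : ℝ) (hp : 1 ≤ p)
    (X : ℝ → ℝ → EuclideanSpace ℝ (Fin d))
    (hcont : ContinuousOn (fun z : ℝ × ℝ => X z.1 z.2) (Set.Icc 0 1 ×ˢ Set.Icc 0 1))
    (t : ℝ) (ht : t ∈ Set.Icc (0:ℝ) 1)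
    (s s' : ℝ) (hs0 : 0 ≤ s) (hss : s < s') (hs1 : s' ≤ 1) :
    oneVarPow p (fun r => X r t) s s' ≤
      (2 : ℝ≥0∞) ^ (p - 1) *
        (cVarPow p X ⟨s, s', 0, 1⟩ + oneVarPow p (fun r => X r 0) s s') :=
  horizontal_path_variation_le_general d p hp X t ht s s'
end

section
/- Let 1 ≤ p < 2. There exists a constant C > 0, depending only on p, such that for every ℓ > 0 and all continuously differentiable paths x, y : [0,1] → ℝ^d with |x|_{p;[0,1]} ≤ ℓ and |y|_{p;[0,1]} ≤ ℓ, and all 0 ≤ s < t ≤ 1, the level-two iterated integrals S₂(x)_{s,t}, defined entrywise by S₂(x)^{i,j}_{s,t} := ∫_s^t (x^i(r) − x^i(s))·(x^j)′(r) dr, satisfy ‖S₂(x)_{s,t} − S₂(y)_{s,t}‖ ≤ C·ℓ·|x − y|_{p;[s,t]}, where the norm on d×d matrices is the Frobenius norm. -/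
open scoped ENNReal

/-- The level-two iterated integral `S₂(x)_{s,t}` of a `C¹` path `x`, viewed as a `d×d`
array: `S₂(x)^{i,j}_{s,t} = ∫ₛᵗ (xⁱ(r) − xⁱ(s))·(xʲ)′(r) dr`. -/
noncomputable def levelTwo (d : ℕ) (x : ℝ → EuclideanSpace ℝ (Fin d))
    (s t : ℝ) : Fin d → Fin d → ℝ :=
  fun i j => ∫ r in s..t, (x r i - x s i) * deriv (fun u => x u j) r

/-- The Frobenius norm of a `d×d` real array. -/
noncomputable def frobNorm (d : ℕ) (M : Fin d → Fin d → ℝ) : ℝ :=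
  Real.sqrt (∑ i, ∑ j, M i j ^ 2)

/-!
With `Δ = x − y`, bilinearity gives
`S₂(x) − S₂(y) = ∫ (Δ_u − Δ_s) ⊗ dx_u + ∫ (y_u − y_s) ⊗ dΔ_u`, and each term is bounded by
Young's estimate `‖∫ₛᵗ B(f_u − f_s, dg_u)‖ ≤ ‖B‖ ζ(2/p) |f|_{p;[s,t]} |g|_{p;[s,t]}`, which is where
`p < 2` enters. Young's estimate is proved for Riemann–Stieltjes sums and passed to the limit.
For a partition with `k + 1` pairs of consecutive increments, Cauchy–Schwarz and the pigeonhole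
principle give a pair with `‖δf‖ ‖δg‖ ≤ |f|_p |g|_p (k + 1)^(-2/p)`; deleting the partition point
between them changes the sum by exactly `B(δf, δg)`, and induction on `k` sums these bounds.
-/

open Finset Set MeasureTheory

section PVariation

variable {E : Type*} [NormedAddCommGroup E] {p : ℝ} {x : ℝ → E} {a b : ℝ}

theorem sum_enorm_rpow_le_oneVarPow {r : ℕ → ℝ} (hr : Monotone r) (k : ℕ) (ha : a ≤ r 0)
    (hb : r k ≤ b) :
    ∑ i ∈ range k, (‖x (r (i + 1)) - x (r i)‖₊ : ℝ≥0∞) ^ p ≤ oneVarPow p x a b := by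
  set ρ : ℕ → ℝ := fun j => if j = 0 then a else if j = k + 2 then b else r (j - 1) with hρ
  have hρmono : ∀ i j, i ≤ j → j ≤ k + 2 → ρ i ≤ ρ j := by
    intro i j hij hj
    simp only [hρ]
    split_ifs <;> first
      | rfl | omega
      | exact ha.trans (hr (Nat.zero_le _))
      | exact (hr (by omega)).trans hb
      | exact ha.trans ((hr (Nat.zero_le _)).trans hb)
      | exact hr (by omega)
  set T : ℕ → ℝ≥0∞ := fun i => (‖x (ρ (i + 1)) - x (ρ i)‖₊ : ℝ≥0∞) ^ p
  have hsum : ∑ i ∈ range k, (‖x (r (i + 1)) - x (r i)‖₊ : ℝ≥0∞) ^ p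
      ≤ ∑ i : Fin (k + 2), T i := by
    rw [Fin.sum_univ_eq_sum_range T, sum_range_succ', sum_range_succ]
    refine le_add_right (le_add_right (sum_le_sum fun i hi => le_of_eq ?_))
    have hik := mem_range.mp hi
    simp only [T, hρ]
    rw [if_neg (by omega), if_neg (by omega), if_neg (by omega), if_neg (by omega)]
    rfl
  refine hsum.trans (le_iSup_of_le (k + 2) <| le_iSup_of_le (fun j => ρ j) <|
    le_iSup_of_le (fun i j hij => hρmono i j hij (by omega)) <| le_iSup_of_le (by simp [hρ]) <|
    le_iSup_of_le (by simp [hρ]) le_rfl)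

theorem oneVarPow_mono {s t : ℝ} (hs : a ≤ s) (ht : t ≤ b) :
    oneVarPow p x s t ≤ oneVarPow p x a b := by
  refine iSup_le fun k => iSup_le fun R => iSup_le fun hR => iSup_le fun hR0 =>
    iSup_le fun hRk => ?_
  set r : ℕ → ℝ := fun i => R ⟨min i k, by omega⟩
  have hr : Monotone r := fun i j hij => hR (Fin.mk_le_mk.mpr (min_le_min_right k hij))
  calc ∑ i : Fin k, (‖x (R i.succ) - x (R i.castSucc)‖₊ : ℝ≥0∞) ^ p
      = ∑ i ∈ range k, (‖x (r (i + 1)) - x (r i)‖₊ : ℝ≥0∞) ^ p := by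
        rw [← Fin.sum_univ_eq_sum_range (fun i => (‖x (r (i + 1)) - x (r i)‖₊ : ℝ≥0∞) ^ p)]
        refine Fintype.sum_congr _ _ fun i => ?_
        simp only [r, Nat.min_eq_left (Nat.succ_le_of_lt i.isLt), Nat.min_eq_left i.isLt.le]
        rfl
    _ ≤ oneVarPow p x a b := by
      refine sum_enorm_rpow_le_oneVarPow hr k ?_ ?_
      · simpa [r, ← hR0] using hs
      · simp only [r, min_self]
        exact hRk ▸ ht

theorem oneVar_mono (hp : 0 ≤ p) {s t : ℝ} (hs : a ≤ s) (ht : t ≤ b) :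
    oneVar p x s t ≤ oneVar p x a b :=
  ENNReal.rpow_le_rpow (oneVarPow_mono hs ht) (by positivity)

theorem oneVarPow_eq_oneVar_rpow (hp : 0 < p) (s t : ℝ) :
    oneVarPow p x s t = oneVar p x s t ^ p := by
  rw [oneVar, ← ENNReal.rpow_mul, one_div_mul_cancel hp.ne', ENNReal.rpow_one]

theorem sum_norm_rpow_le_of_oneVar_le (hp : 0 < p) {K : ℝ} (hK : 0 ≤ K)
    (hxK : oneVar p x a b ≤ ENNReal.ofReal K) {r : ℕ → ℝ} (hr : Monotone r) (k : ℕ)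
    (ha : a ≤ r 0) (hb : r k ≤ b) :
    ∑ i ∈ range k, ‖x (r (i + 1)) - x (r i)‖ ^ p ≤ K ^ p := by
  rw [← ENNReal.ofReal_le_ofReal_iff (by positivity), ENNReal.ofReal_sum_of_nonneg
    (fun i _ => by positivity), ← ENNReal.ofReal_rpow_of_nonneg hK hp.le]
  calc ∑ i ∈ range k, ENNReal.ofReal (‖x (r (i + 1)) - x (r i)‖ ^ p)
      = ∑ i ∈ range k, (‖x (r (i + 1)) - x (r i)‖₊ : ℝ≥0∞) ^ p := by
        simp only [← ENNReal.ofReal_rpow_of_nonneg (norm_nonneg _) hp.le, ofReal_norm,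
          enorm_eq_nnnorm]
    _ ≤ oneVarPow p x a b := sum_enorm_rpow_le_oneVarPow hr k ha hb
    _ = oneVar p x a b ^ p := oneVarPow_eq_oneVar_rpow hp a b
    _ ≤ ENNReal.ofReal K ^ p := ENNReal.rpow_le_rpow hxK hp.le

end PVariation

theorem Finset.exists_mem_card_sq_mul_le_sum_mul_sum {ι : Type*} {s : Finset ι} (hs : s.Nonempty)
    {u v : ι → ℝ} (hu : ∀ i, 0 ≤ u i) (hv : ∀ i, 0 ≤ v i) :
    ∃ m ∈ s, (#s : ℝ) ^ 2 * (u m * v m) ≤ (∑ i ∈ s, u i) * ∑ i ∈ s, v i := by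
  obtain ⟨m, hm, hmin⟩ := s.exists_min_image (fun i => u i * v i) hs
  refine ⟨m, hm, ?_⟩
  have hpigeon : (#s : ℝ) * √(u m * v m) ≤ ∑ i ∈ s, √(u i) * √(v i) := by
    simpa [← Real.sqrt_mul (hu _)] using
      s.card_nsmul_le_sum _ _ fun i hi => Real.sqrt_le_sqrt (hmin i hi)
  have hCS := (hpigeon.trans (Real.sum_sqrt_mul_sqrt_le s (fun i => hu i) (fun i => hv i)))
  have := pow_le_pow_left₀ (by positivity) hCS 2
  rwa [mul_pow, mul_pow, Real.sq_sqrt (mul_nonneg (hu m) (hv m)),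
    Real.sq_sqrt (sum_nonneg fun i _ => hu i), Real.sq_sqrt (sum_nonneg fun i _ => hv i)] at this

theorem exists_mul_le_of_sum_rpow_le {p : ℝ} (hp : 0 < p) {a b : ℕ → ℝ} (ha : ∀ i, 0 ≤ a i)
    (hb : ∀ i, 0 ≤ b i) {A B : ℝ} (hA : 0 ≤ A) (hB : 0 ≤ B) (n : ℕ)
    (hsa : ∑ i ∈ range (n + 1), a i ^ p ≤ A ^ p) (hsb : ∑ i ∈ range (n + 1), b i ^ p ≤ B ^ p) :
    ∃ m ≤ n, a m * b m ≤ A * B * (((n : ℝ) + 1) ^ (2 / p))⁻¹ := by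
  obtain ⟨m, hm, hmin⟩ := (range (n + 1)).exists_mem_card_sq_mul_le_sum_mul_sum ⟨0, by simp⟩
    (fun i => Real.rpow_nonneg (ha i) p) (fun i => Real.rpow_nonneg (hb i) p)
  refine ⟨m, Nat.lt_succ_iff.mp (mem_range.mp hm), ?_⟩
  have hN : (0 : ℝ) < n + 1 := by positivity
  have hpow : (A * B * (((n : ℝ) + 1) ^ (2 / p))⁻¹) ^ p = A ^ p * B ^ p / ((n : ℝ) + 1) ^ 2 := by
    rw [Real.mul_rpow (by positivity) (by positivity), Real.mul_rpow hA hB,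
      Real.inv_rpow (by positivity), ← Real.rpow_mul hN.le, div_mul_cancel₀ _ hp.ne',
      Real.rpow_two, div_eq_mul_inv]
  rw [← Real.rpow_le_rpow_iff (mul_nonneg (ha m) (hb m)) (by positivity) hp, hpow,
    Real.mul_rpow (ha m) (hb m), le_div_iff₀ (by positivity), mul_comm]
  push_cast [card_range] at hmin
  exact hmin.trans
    (mul_le_mul hsa hsb (sum_nonneg fun i _ => Real.rpow_nonneg (hb i) p) (by positivity))

theorem summable_inv_rpow_nat_add_one {q : ℝ} (hq : 1 < q) :
    Summable fun n : ℕ => (((n : ℝ) + 1) ^ q)⁻¹ := by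
  simpa using (summable_nat_add_iff 1).mpr (Real.summable_nat_rpow_inv.mpr hq)

section IteratedIntegral

variable {E F G : Type*} [NormedAddCommGroup E] [NormedSpace ℝ E] [NormedAddCommGroup F]
  [NormedSpace ℝ F] [NormedAddCommGroup G] [NormedSpace ℝ G] (B : E →L[ℝ] F →L[ℝ] G)

noncomputable def discreteIteratedSum (f : ℝ → E) (g : ℝ → F) (r : ℕ → ℝ) (k : ℕ) : G :=
  ∑ i ∈ range k, B (f (r i) - f (r 0)) (g (r (i + 1)) - g (r i))

def skipIndex (n i : ℕ) : ℕ := if i < n then i else i + 1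

theorem skipIndex_monotone (n : ℕ) : Monotone (skipIndex n) :=
  monotone_nat_of_le_succ fun i => by unfold skipIndex; split_ifs <;> omega

theorem discreteIteratedSum_skipIndex (f : ℝ → E) (g : ℝ → F) (r : ℕ → ℝ) (m j : ℕ) :
    discreteIteratedSum B f g r (m + 2 + j) =
      discreteIteratedSum B f g (r ∘ skipIndex (m + 1)) (m + 1 + j) +
        B (f (r (m + 1)) - f (r m)) (g (r (m + 2)) - g (r (m + 1))) := by
  have hlow : ∀ i ≤ m, (r ∘ skipIndex (m + 1)) i = r i := fun i hi => by
    simp [skipIndex, Nat.lt_succ_of_le hi]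
  have hhigh : ∀ i > m, (r ∘ skipIndex (m + 1)) i = r (i + 1) := fun i hi => by
    simp [skipIndex, Nat.not_lt.mpr (Nat.succ_le_of_lt hi)]
  induction j with
  | zero =>
    have hprefix : discreteIteratedSum B f g (r ∘ skipIndex (m + 1)) m =
        discreteIteratedSum B f g r m :=
      sum_congr rfl fun i hi => by
        rw [hlow i (mem_range.mp hi).le, hlow (i + 1) (mem_range.mp hi), hlow 0 (Nat.zero_le _)]
    simp only [discreteIteratedSum, add_zero] at hprefix ⊢
    rw [sum_range_succ, sum_range_succ, sum_range_succ, hprefix, hlow m le_rfl,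
      hhigh (m + 1) (by omega), hlow 0 (Nat.zero_le _)]
    simp only [map_sub, sub_apply]
    abel
  | succ j ih =>
    simp only [discreteIteratedSum, hlow 0 (Nat.zero_le _)] at ih ⊢
    rw [← add_assoc, sum_range_succ, ih, ← add_assoc, sum_range_succ, hhigh (m + 1 + j) (by omega),
      hhigh (m + 1 + j + 1) (by omega), show m + 1 + j + 1 = m + 2 + j by omega]
    abel

theorem norm_discreteIteratedSum_le {p : ℝ} (hp : 0 < p) {f : ℝ → E} {g : ℝ → F}
    {a b Kf Kg : ℝ} (hKf : 0 ≤ Kf) (hKg : 0 ≤ Kg) (hf : oneVar p f a b ≤ ENNReal.ofReal Kf)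
    (hg : oneVar p g a b ≤ ENNReal.ofReal Kg) (k : ℕ) {r : ℕ → ℝ} (hr : Monotone r)
    (ha : a ≤ r 0) (hb : r (k + 1) ≤ b) :
    ‖discreteIteratedSum B f g r (k + 1)‖ ≤
      ‖B‖ * Kf * Kg * ∑ i ∈ range k, (((i : ℝ) + 1) ^ (2 / p))⁻¹ := by
  induction k generalizing r with
  | zero => simp [discreteIteratedSum]
  | succ k ih =>
    obtain ⟨m, hmk, hm⟩ := exists_mul_le_of_sum_rpow_le hp (fun _ => norm_nonneg _)
      (fun _ => norm_nonneg _) hKf hKg k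
      (sum_norm_rpow_le_of_oneVar_le hp hKf hf hr (k + 1) ha ((hr (by omega)).trans hb))
      (sum_norm_rpow_le_of_oneVar_le hp hKg hg (r := fun i => r (i + 1))
        (fun i j hij => hr (by omega)) (k + 1) (ha.trans (hr (by omega))) hb)
    have hskip := discreteIteratedSum_skipIndex B f g r m (k - m)
    rw [show m + 2 + (k - m) = k + 1 + 1 by omega, show m + 1 + (k - m) = k + 1 by omega] at hskip
    have hIH := ih (r := r ∘ skipIndex (m + 1)) (hr.comp (skipIndex_monotone _))
      (by simpa [skipIndex] using ha) (by simpa [skipIndex, show ¬ k + 1 < m + 1 by omega] using hb)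
    rw [hskip, sum_range_succ]
    calc _ ≤ ‖discreteIteratedSum B f g (r ∘ skipIndex (m + 1)) (k + 1)‖
          + ‖B‖ * (‖f (r (m + 1)) - f (r m)‖ * ‖g (r (m + 2)) - g (r (m + 1))‖) := by
          rw [← mul_assoc]
          exact (norm_add_le _ _).trans (add_le_add le_rfl (B.le_opNorm₂ _ _))
      _ ≤ ‖B‖ * Kf * Kg * ∑ i ∈ range k, (((i : ℝ) + 1) ^ (2 / p))⁻¹
          + ‖B‖ * (Kf * Kg * (((k : ℝ) + 1) ^ (2 / p))⁻¹) := by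
          gcongr
      _ = _ := by ring

noncomputable def iteratedIntegral (f : ℝ → E) (g : ℝ → F) (s t : ℝ) : G :=
  ∫ u in s..t, B (f u - f s) (deriv g u)

variable {f : ℝ → E} {g : ℝ → F}

theorem continuous_apply_sub_deriv (hf : Continuous f) (hg : ContDiff ℝ 1 g) (c : E) :
    Continuous fun u => B (f u - c) (deriv g u) :=
  (B.continuous.comp (hf.sub continuous_const)).clm_apply (hg.continuous_deriv le_rfl)

theorem iteratedIntegral_sub_iteratedIntegral {x₁ y₁ : ℝ → E} {x₂ y₂ : ℝ → F}
    (hx₁ : Continuous x₁) (hy₁ : Continuous y₁) (hx₂ : ContDiff ℝ 1 x₂) (hy₂ : ContDiff ℝ 1 y₂)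
    (s t : ℝ) :
    iteratedIntegral B x₁ x₂ s t - iteratedIntegral B y₁ y₂ s t =
      iteratedIntegral B (x₁ - y₁) x₂ s t + iteratedIntegral B y₁ (x₂ - y₂) s t := by
  have hint : ∀ {f : ℝ → E} {g : ℝ → F}, Continuous f → ContDiff ℝ 1 g →
      IntervalIntegrable (fun u => B (f u - f s) (deriv g u)) volume s t :=
    fun hf hg => (continuous_apply_sub_deriv B hf hg _).intervalIntegrable _ _
  have hderiv : deriv (x₂ - y₂) = deriv x₂ - deriv y₂ := funext fun u =>
    deriv_sub ((hx₂.differentiable one_ne_zero) u) ((hy₂.differentiable one_ne_zero) u)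
  rw [iteratedIntegral, iteratedIntegral, iteratedIntegral, iteratedIntegral,
    ← intervalIntegral.integral_sub (hint hx₁ hx₂) (hint hy₁ hy₂),
    ← intervalIntegral.integral_add (hint (f := x₁ - y₁) (hx₁.sub hy₁) hx₂)
      (hint (g := x₂ - y₂) hy₁ (hx₂.sub hy₂))]
  refine intervalIntegral.integral_congr fun u _ => ?_
  simp only [hderiv, Pi.sub_apply, map_sub, sub_apply]
  abel

variable [CompleteSpace F] [CompleteSpace G]

theorem norm_integral_sub_apply_left_le (hf : Continuous f) (hg : ContDiff ℝ 1 g) (c : E)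
    {a b ε : ℝ} (hab : a ≤ b) (hε : ∀ u ∈ Icc a b, ‖f u - f a‖ ≤ ε) :
    ‖(∫ u in a..b, B (f u - c) (deriv g u)) - B (f a - c) (g b - g a)‖ ≤
      ‖B‖ * ε * ∫ u in a..b, ‖deriv g u‖ := by
  have hg' := hg.continuous_deriv le_rfl
  rw [← intervalIntegral.integral_deriv_eq_sub (fun u _ => (hg.differentiable one_ne_zero) u)
      (hg'.intervalIntegrable _ _),
    ← (B (f a - c)).intervalIntegral_comp_comm (hg'.intervalIntegrable _ _),
    ← intervalIntegral.integral_sub ((continuous_apply_sub_deriv B hf hg c).intervalIntegrable _ _)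
      ((continuous_apply_sub_deriv B continuous_const hg c).intervalIntegrable a b),
    ← intervalIntegral.integral_const_mul]
  refine intervalIntegral.norm_integral_le_of_norm_le hab (ae_of_all _ fun u hu => ?_)
    ((continuous_const.mul hg'.norm).intervalIntegrable _ _)
  calc ‖B (f u - c) (deriv g u) - B (f a - c) (deriv g u)‖
      = ‖B (f u - f a) (deriv g u)‖ := by simp only [map_sub, sub_apply, sub_sub_sub_cancel_right]
    _ ≤ ‖B‖ * ‖f u - f a‖ * ‖deriv g u‖ := B.le_opNorm₂ _ _
    _ ≤ ‖B‖ * ε * ‖deriv g u‖ := by gcongr; exact hε u (Ioc_subset_Icc_self hu)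

theorem norm_iteratedIntegral_sub_discreteIteratedSum_le (hf : Continuous f)
    (hg : ContDiff ℝ 1 g) {r : ℕ → ℝ} (hr : Monotone r) {ε : ℝ} (n : ℕ)
    (hε : ∀ m < n, ∀ u ∈ Icc (r m) (r (m + 1)), ‖f u - f (r m)‖ ≤ ε) :
    ‖iteratedIntegral B f g (r 0) (r n) - discreteIteratedSum B f g r n‖ ≤
      ‖B‖ * ε * ∫ u in r 0..r n, ‖deriv g u‖ := by
  induction n with
  | zero => simp [iteratedIntegral, discreteIteratedSum]
  | succ n ih =>
    have hg' := hg.continuous_deriv le_rfl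
    have hint := (continuous_apply_sub_deriv B hf hg (f (r 0))).intervalIntegrable (μ := volume)
    have hpiece := norm_integral_sub_apply_left_le B hf hg (f (r 0)) (hr n.le_succ) (hε n n.lt_succ_self)
    rw [iteratedIntegral, ← intervalIntegral.integral_add_adjacent_intervals (hint _ (r n))
        (hint _ _), discreteIteratedSum, sum_range_succ,
      ← intervalIntegral.integral_add_adjacent_intervals (hg'.norm.intervalIntegrable _ (r n))
        (hg'.norm.intervalIntegrable _ _), mul_add]
    calc _ = ‖(iteratedIntegral B f g (r 0) (r n) - discreteIteratedSum B f g r n) +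
          ((∫ u in r n..r (n + 1), B (f u - f (r 0)) (deriv g u)) -
            B (f (r n) - f (r 0)) (g (r (n + 1)) - g (r n)))‖ := by
          rw [iteratedIntegral, discreteIteratedSum]; congr 1; abel
      _ ≤ _ := (norm_add_le _ _).trans
          (add_le_add (ih fun m hm => hε m (Nat.lt_succ_of_lt hm)) hpiece)

theorem exists_norm_iteratedIntegral_sub_discreteIteratedSum_le (hf : Continuous f)
    (hg : ContDiff ℝ 1 g) {s t : ℝ} (hst : s ≤ t) {ε : ℝ} (hε : 0 < ε) :
    ∃ (r : ℕ → ℝ) (k : ℕ), Monotone r ∧ r 0 = s ∧ r (k + 1) = t ∧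
      ‖iteratedIntegral B f g s t - discreteIteratedSum B f g r (k + 1)‖ ≤ ε := by
  set L := ∫ u in s..t, ‖deriv g u‖
  have hL : 0 ≤ L := intervalIntegral.integral_nonneg hst fun _ _ => norm_nonneg _
  set η := ε / (‖B‖ * L + 1)
  obtain ⟨δ, hδ, hfδ⟩ := Metric.uniformContinuousOn_iff.mp
    (isCompact_Icc.uniformContinuousOn_of_continuous hf.continuousOn) η (by positivity)
  obtain ⟨k, hk⟩ := exists_nat_gt ((t - s) / δ)
  set h := (t - s) / (k + 1)
  have hh : 0 ≤ h := div_nonneg (sub_nonneg.mpr hst) (by positivity)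
  have hhδ : h < δ := by
    rw [div_lt_iff₀ (by positivity)]
    rw [div_lt_iff₀ hδ] at hk
    nlinarith
  set r : ℕ → ℝ := fun i => s + i * h
  have hr : Monotone r := fun i j hij => by simp only [r]; gcongr
  have hr0 : r 0 = s := by simp [r]
  have hrk : r (k + 1) = t := by simp only [r, h]; push_cast; field_simp; ring
  refine ⟨r, k, hr, hr0, hrk, ?_⟩
  have happrox := norm_iteratedIntegral_sub_discreteIteratedSum_le B hf hg hr (ε := η) (k + 1)
    fun m hm u hu => ?_
  · rw [hr0, hrk] at happrox
    refine happrox.trans ?_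
    calc ‖B‖ * η * L = ε * (‖B‖ * L / (‖B‖ * L + 1)) := by ring
      _ ≤ ε * 1 := by gcongr; exact div_le_one_of_le₀ (by linarith) (by positivity)
      _ = ε := mul_one ε
  · have hrm : r m ∈ Icc s t := ⟨hr0 ▸ hr m.zero_le, hrk ▸ hr hm.le⟩
    have hu' : u ∈ Icc s t := ⟨hrm.1.trans hu.1, hu.2.trans (hrk ▸ hr hm)⟩
    have hdist : dist u (r m) < δ := by
      rw [Real.dist_eq, abs_of_nonneg (sub_nonneg.mpr hu.1)]
      calc u - r m ≤ r (m + 1) - r m := by linarith [hu.2]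
        _ = h := by simp only [r]; push_cast; ring
        _ < δ := hhδ
    rw [← dist_eq_norm]
    exact (hfδ u hu' (r m) hrm hdist).le

theorem norm_iteratedIntegral_le {p : ℝ} (hp : 0 < p) (hp2 : p < 2) (hf : Continuous f)
    (hg : ContDiff ℝ 1 g) {s t : ℝ} (hst : s ≤ t) {Kf Kg : ℝ} (hKf : 0 ≤ Kf) (hKg : 0 ≤ Kg)
    (hfK : oneVar p f s t ≤ ENNReal.ofReal Kf) (hgK : oneVar p g s t ≤ ENNReal.ofReal Kg) :
    ‖iteratedIntegral B f g s t‖ ≤ ‖B‖ * Kf * Kg * ∑' n : ℕ, (((n : ℝ) + 1) ^ (2 / p))⁻¹ := by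
  have hsum := summable_inv_rpow_nat_add_one (q := 2 / p) (by rw [lt_div_iff₀ hp]; linarith)
  refine le_of_forall_pos_le_add fun ε hε => ?_
  obtain ⟨r, k, hr, hr0, hrk, happrox⟩ :=
    exists_norm_iteratedIntegral_sub_discreteIteratedSum_le B hf hg hst hε
  calc ‖iteratedIntegral B f g s t‖
      ≤ ‖discreteIteratedSum B f g r (k + 1)‖ +
          ‖iteratedIntegral B f g s t - discreteIteratedSum B f g r (k + 1)‖ :=
        norm_le_norm_add_norm_sub' _ _
    _ ≤ ‖B‖ * Kf * Kg * ∑ i ∈ range k, (((i : ℝ) + 1) ^ (2 / p))⁻¹ + ε :=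
        add_le_add (norm_discreteIteratedSum_le B hp hKf hKg hfK hgK k hr hr0.ge hrk.le) happrox
    _ ≤ _ := by
        gcongr
        exact hsum.sum_le_tsum _ fun i _ => by positivity

end IteratedIntegral

theorem EuclideanSpace.norm_toLp_mul {d : ℕ} (a b : EuclideanSpace ℝ (Fin d)) :
    ‖WithLp.toLp 2 (fun q : Fin d × Fin d => a q.1 * b q.2)‖ = ‖a‖ * ‖b‖ := by
  rw [EuclideanSpace.norm_eq, EuclideanSpace.norm_eq, EuclideanSpace.norm_eq,
    ← Real.sqrt_mul (by positivity), Fintype.sum_prod_type, sum_mul_sum]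
  simp [Real.norm_eq_abs, mul_pow]

noncomputable def outerProduct (d : ℕ) : EuclideanSpace ℝ (Fin d) →L[ℝ]
    EuclideanSpace ℝ (Fin d) →L[ℝ] EuclideanSpace ℝ (Fin d × Fin d) :=
  LinearMap.mkContinuous₂
    (LinearMap.mk₂ ℝ (fun a b => WithLp.toLp 2 fun q => a q.1 * b q.2)
      (fun a a' b => by ext; simp [add_mul]) (fun c a b => by ext; simp [mul_assoc])
      (fun a b b' => by ext; simp [mul_add]) (fun c a b => by ext; simp; ring))
    1 fun a b => by simp [EuclideanSpace.norm_toLp_mul]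

theorem outerProduct_apply {d : ℕ} (a b : EuclideanSpace ℝ (Fin d)) (q : Fin d × Fin d) :
    outerProduct d a b q = a q.1 * b q.2 := rfl

theorem norm_outerProduct_le (d : ℕ) : ‖outerProduct d‖ ≤ 1 :=
  LinearMap.mkContinuous₂_norm_le _ zero_le_one _

theorem EuclideanSpace.deriv_apply {ι : Type*} [Fintype ι] {x : ℝ → EuclideanSpace ℝ ι} {u : ℝ}
    (hx : DifferentiableAt ℝ x u) (j : ι) : deriv (fun v => x v j) u = deriv x u j :=
  ((EuclideanSpace.proj (𝕜 := ℝ) j).hasFDerivAt.comp_hasDerivAt u hx.hasDerivAt).deriv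

theorem iteratedIntegral_outerProduct_apply {d : ℕ} {x : ℝ → EuclideanSpace ℝ (Fin d)}
    (hx : ContDiff ℝ 1 x) (s t : ℝ) (i j : Fin d) :
    iteratedIntegral (outerProduct d) x x s t (i, j) = levelTwo d x s t i j := by
  change EuclideanSpace.proj (𝕜 := ℝ) (i, j) (iteratedIntegral _ x x s t) = _
  rw [iteratedIntegral, levelTwo, ← ContinuousLinearMap.intervalIntegral_comp_comm _
      ((continuous_apply_sub_deriv _ hx.continuous hx _).intervalIntegrable _ _)]
  refine intervalIntegral.integral_congr fun u _ => ?_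
  simp [outerProduct_apply, EuclideanSpace.deriv_apply ((hx.differentiable one_ne_zero) u), sub_mul]

theorem frobNorm_levelTwo_sub {d : ℕ} {x y : ℝ → EuclideanSpace ℝ (Fin d)}
    (hx : ContDiff ℝ 1 x) (hy : ContDiff ℝ 1 y) (s t : ℝ) :
    frobNorm d (fun i j => levelTwo d x s t i j - levelTwo d y s t i j) =
      ‖iteratedIntegral (outerProduct d) x x s t - iteratedIntegral (outerProduct d) y y s t‖ := by
  rw [frobNorm, EuclideanSpace.norm_eq, Fintype.sum_prod_type]
  simp [← iteratedIntegral_outerProduct_apply hx, ← iteratedIntegral_outerProduct_apply hy,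
    Real.norm_eq_abs, sq_abs]

/-- For `1 ≤ p < 2` there is a constant `C > 0`, depending only on `p`,
such that for every `ℓ > 0`, all `C¹` paths `x, y : [0,1] → ℝ^d` of `p`-variation at most
`ℓ`, and all `0 ≤ s < t ≤ 1`, the level-two iterated integrals satisfy
`‖S₂(x)_{s,t} − S₂(y)_{s,t}‖_F ≤ C·ℓ·|x − y|_{p;[s,t]}`. -/
theorem levelTwo_local_lipschitz
    (p : ℝ) (hp1 : 1 ≤ p) (hp2 : p < 2) :
    ∃ C : ℝ, 0 < C ∧
      ∀ (d : ℕ) (ℓ : ℝ), 0 < ℓ →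
        ∀ x y : ℝ → EuclideanSpace ℝ (Fin d),
          ContDiff ℝ 1 x → ContDiff ℝ 1 y →
          oneVar p x 0 1 ≤ ENNReal.ofReal ℓ → oneVar p y 0 1 ≤ ENNReal.ofReal ℓ →
          ∀ s t : ℝ, 0 ≤ s → s < t → t ≤ 1 →
            ENNReal.ofReal
                (frobNorm d (fun i j => levelTwo d x s t i j - levelTwo d y s t i j)) ≤
              ENNReal.ofReal (C * ℓ) * oneVar p (fun r => x r - y r) s t := by
  have hp : 0 < p := by linarith
  set Z := ∑' n : ℕ, (((n : ℝ) + 1) ^ (2 / p))⁻¹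
  have hZ : 0 < Z := (summable_inv_rpow_nat_add_one (by rw [lt_div_iff₀ hp]; linarith)).tsum_pos
    (fun n => by positivity) 0 (by positivity)
  refine ⟨2 * Z, by positivity, fun d ℓ hℓ x y hx hy hxℓ hyℓ s t hs hst ht => ?_⟩
  rcases eq_or_ne (oneVar p (fun r => x r - y r) s t) ⊤ with hΔ | hΔ
  · rw [hΔ, ENNReal.mul_top (by simp only [ne_eq, ENNReal.ofReal_eq_zero, not_le]; positivity)]
    exact le_top
  set K := (oneVar p (fun r => x r - y r) s t).toReal
  have hK : 0 ≤ K := ENNReal.toReal_nonneg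
  have hΔK := (ENNReal.ofReal_toReal hΔ).ge
  have h₁ := norm_iteratedIntegral_le (outerProduct d) hp hp2 (hx.continuous.sub hy.continuous)
    hx hst.le hK hℓ.le hΔK ((oneVar_mono hp.le hs ht).trans hxℓ)
  have h₂ := norm_iteratedIntegral_le (outerProduct d) hp hp2 hy.continuous (hx.sub hy) hst.le
    hℓ.le hK ((oneVar_mono hp.le hs ht).trans hyℓ) hΔK
  rw [frobNorm_levelTwo_sub hx hy, iteratedIntegral_sub_iteratedIntegral _ hx.continuous
    hy.continuous hx hy, ← ENNReal.ofReal_toReal hΔ, ← ENNReal.ofReal_mul (by positivity)]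
  refine ENNReal.ofReal_le_ofReal ?_
  have hB := norm_outerProduct_le d
  calc _ ≤ _ := (norm_add_le _ _).trans (add_le_add h₁ h₂)
    _ ≤ 1 * K * ℓ * Z + 1 * ℓ * K * Z := by gcongr
    _ = 2 * Z * ℓ * K := by ring
end

section
/- Let α : ℝ^d → M_n(ℝ) be a linear map, and let x, y : [0,1] → ℝ^d be continuously differentiable paths with x(1) = y(0). Suppose F, G : [0,1] → M_n(ℝ) are differentiable with F(0) = G(0) = 1, F′(t) = F(t)·α(x′(t)) and G′(t) = G(t)·α(y′(t)) for all t ∈ [0,1]. Suppose K : [0,1] → M_n(ℝ) is continuous with K(0) = 1, differentiable at every t ≠ 1/2, and satisfies K′(t) = 2·K(t)·α(x′(2t)) for t ∈ [0,1/2) and K′(t) = 2·K(t)·α(y′(2t−1)) for t ∈ (1/2,1] (this is the path-development equation driven by the concatenation x ⋆ y). Then K(1) = F(1)·G(1). -/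
/-!
On each half of `[0, 1]`, `K` and the time-rescaled development (`F (2t)` on `[0, 1/2]`,
`F 1 * G (2t - 1)` on `[1/2, 1]`) solve the same linear equation `M' = M · A(t)` with the same
initial value, so they agree by uniqueness for linear ODEs with continuous coefficients. `K` is
not assumed differentiable at `1/2`; its right derivative there is recovered from the limit of
its derivatives, which is what the Grönwall-type uniqueness theorem needs.
-/

open Set Filter Topology

theorem hasDerivWithinAt_Ici_of_hasDerivAt_Ioo {E : Type*} [NormedAddCommGroup E]
    [NormedSpace ℝ E] {f f' : ℝ → E} {a b t : ℝ} (hf : ContinuousOn f (Icc a b))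
    (hf' : ContinuousOn f' (Icc a b)) (hderiv : ∀ s ∈ Ioo a b, HasDerivAt f (f' s) s)
    (ht : t ∈ Ico a b) : HasDerivWithinAt f (f' t) (Ici t) t := by
  obtain ⟨hat, htb⟩ := ht
  rcases hat.eq_or_lt with rfl | hat
  · have ha : a ∈ Icc a b := left_mem_Icc.2 htb.le
    refine hasDerivWithinAt_Ici_of_tendsto_deriv (s := Ioo a b)
      (fun s hs => (hderiv s hs).differentiableAt.differentiableWithinAt)
      ((hf a ha).mono Ioo_subset_Icc_self) (Ioo_mem_nhdsGT htb) ?_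
    have hlim : Tendsto f' (𝓝[>] a) (𝓝 (f' a)) := by
      have := (hf' a ha).mono_left (nhdsWithin_mono a Ioo_subset_Icc_self)
      rwa [nhdsWithin_Ioo_eq_nhdsGT htb] at this
    refine hlim.congr' ?_
    filter_upwards [Ioo_mem_nhdsGT htb] with s hs
    exact (hderiv s hs).deriv.symm
  · exact (hderiv t ⟨hat, htb⟩).hasDerivWithinAt

theorem linear_ODE_solution_unique_of_mem_Icc {E : Type*} [NormedAddCommGroup E]
    [NormedSpace ℝ E] {L : ℝ → E →L[ℝ] E} {f g : ℝ → E} {a b : ℝ}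
    (hL : ContinuousOn L (Icc a b)) (hf : ContinuousOn f (Icc a b))
    (hf' : ∀ t ∈ Ioo a b, HasDerivAt f (L t (f t)) t) (hg : ContinuousOn g (Icc a b))
    (hg' : ∀ t ∈ Ioo a b, HasDerivAt g (L t (g t)) t) (ha : f a = g a) :
    EqOn f g (Icc a b) := by
  obtain ⟨C, hC⟩ := isCompact_Icc.exists_bound_of_continuousOn hL
  have hLip : ∀ t ∈ Ico a b, LipschitzWith C.toNNReal (L t) := fun t ht =>
    (L t).lipschitz.weaken <| by
      rw [← NNReal.coe_le_coe, coe_nnnorm]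
      exact (hC t (Ico_subset_Icc_self ht)).trans (Real.le_coe_toNNReal C)
  exact ODE_solution_unique_of_mem_Icc_right (s := fun _ => univ)
    (fun t ht => (hLip t ht).lipschitzOnWith) hf
    (fun t => hasDerivWithinAt_Ici_of_hasDerivAt_Ioo hf
      (fun s hs => (hL s hs).clm_apply (hf s hs)) hf')
    (fun _ _ => mem_univ _) hg
    (fun t => hasDerivWithinAt_Ici_of_hasDerivAt_Ioo hg
      (fun s hs => (hL s hs).clm_apply (hg s hs)) hg')
    (fun _ _ => mem_univ _) ha

namespace Matrix

theorem hasDerivWithinAt_iff {l m : Type*} [Fintype m] {f : ℝ → Matrix l m ℝ}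
    {f' : Matrix l m ℝ} {s : Set ℝ} {t : ℝ} :
    HasDerivWithinAt f f' s t ↔ ∀ i j, HasDerivWithinAt (fun u => f u i j) (f' i j) s t :=
  hasDerivWithinAt_pi.trans (forall_congr' fun _ => hasDerivWithinAt_pi)

attribute [local instance] Matrix.normedAddCommGroup Matrix.normedSpace

variable {l m : Type*} [Fintype l] [Fintype m]

theorem hasDerivAt_const_mul {n : Type*} [Fintype n] (M : Matrix n l ℝ)
    {f : ℝ → Matrix l m ℝ} {f' : Matrix l m ℝ} {t : ℝ} (hf : HasDerivAt f f' t) :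
    HasDerivAt (fun u => M * f u) (M * f') t :=
  (mulLeftLinearMap m ℝ M).toContinuousLinearMap.hasFDerivAt.comp_hasDerivAt t hf

theorem mul_right_ODE_solution_unique_of_mem_Icc {A : ℝ → Matrix m m ℝ}
    {f g : ℝ → Matrix l m ℝ} {a b : ℝ} (hA : ContinuousOn A (Icc a b))
    (hf : ContinuousOn f (Icc a b)) (hf' : ∀ t ∈ Ioo a b, HasDerivAt f (f t * A t) t)
    (hg : ContinuousOn g (Icc a b)) (hg' : ∀ t ∈ Ioo a b, HasDerivAt g (g t * A t) t)
    (ha : f a = g a) : EqOn f g (Icc a b) := by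
  let R : Matrix m m ℝ →ₗ[ℝ] Matrix l m ℝ →L[ℝ] Matrix l m ℝ :=
    LinearMap.toContinuousLinearMap.toLinearMap ∘ₗ (mulLinearMap ℝ).flip
  exact linear_ODE_solution_unique_of_mem_Icc (L := fun t => R (A t))
    (R.continuous_of_finiteDimensional.comp_continuousOn hA) hf hf' hg hg' ha

theorem eq_mul_of_mul_right_ODE_rescaled [DecidableEq m] {A F : ℝ → Matrix m m ℝ}
    {K : ℝ → Matrix l m ℝ} {a b c : ℝ} (ha : 2 * a - c = 0) (hb : 2 * b - c = 1)
    (hA : ContinuousOn A (Icc 0 1)) (hF : ContinuousOn F (Icc 0 1))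
    (hF' : ∀ s ∈ Ioo 0 1, HasDerivAt F (F s * A s) s) (hF0 : F 0 = 1)
    (hK : ContinuousOn K (Icc a b))
    (hK' : ∀ t ∈ Ioo a b, HasDerivAt K ((2:ℝ) • (K t * A (2 * t - c))) t) :
    K b = K a * F 1 := by
  have maps : MapsTo (fun t => 2 * t - c) (Icc a b) (Icc 0 1) := fun t ht =>
    ⟨by linarith [ht.1], by linarith [ht.2]⟩
  have rescaled : EqOn K (fun t => K a * F (2 * t - c)) (Icc a b) := by
    refine mul_right_ODE_solution_unique_of_mem_Icc (A := fun t => (2:ℝ) • A (2 * t - c))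
      ((hA.comp (by fun_prop) maps).const_smul (2:ℝ)) hK (fun t ht => ?_)
      ((continuous_const.matrix_mul continuous_id).comp_continuousOn (hF.comp (by fun_prop) maps))
      (fun t ht => ?_) (by simp [ha, hF0])
    · rw [Matrix.mul_smul]
      exact hK' t ht
    · have hs : 2 * t - c ∈ Ioo 0 1 := ⟨by linarith [ht.1], by linarith [ht.2]⟩
      rw [Matrix.mul_smul, Matrix.mul_assoc, ← Matrix.mul_smul]
      exact hasDerivAt_const_mul (K a) ((hF' _ hs).scomp t
        (by simpa using ((hasDerivAt_id t).const_mul (2:ℝ)).sub_const c))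
  simpa [hb] using rescaled (right_mem_Icc.2 (by linarith))

end Matrix

attribute [local instance] Matrix.normedAddCommGroup Matrix.normedSpace

theorem path_development_concatenation_general
    (d n : ℕ) (α : EuclideanSpace ℝ (Fin d) →ₗ[ℝ] Matrix (Fin n) (Fin n) ℝ)
    (x y : ℝ → EuclideanSpace ℝ (Fin d))
    (hx : ContDiff ℝ 1 x) (hy : ContDiff ℝ 1 y)
    (F G K : ℝ → Matrix (Fin n) (Fin n) ℝ)
    (hF0 : F 0 = 1) (hG0 : G 0 = 1) (hK0 : K 0 = 1)
    (hF : ∀ t ∈ Set.Icc (0:ℝ) 1, ∀ i j,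
      HasDerivWithinAt (fun u => F u i j) ((F t * α (deriv x t)) i j) (Set.Icc (0:ℝ) 1) t)
    (hG : ∀ t ∈ Set.Icc (0:ℝ) 1, ∀ i j,
      HasDerivWithinAt (fun u => G u i j) ((G t * α (deriv y t)) i j) (Set.Icc (0:ℝ) 1) t)
    (hKcont : ContinuousOn K (Set.Icc (0:ℝ) 1))
    (hK₁ : ∀ t ∈ Set.Ico (0:ℝ) (1/2), ∀ i j,
      HasDerivWithinAt (fun u => K u i j) (((2:ℝ) • (K t * α (deriv x (2*t)))) i j)
        (Set.Icc (0:ℝ) 1) t)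
    (hK₂ : ∀ t ∈ Set.Ioc (1/2:ℝ) 1, ∀ i j,
      HasDerivWithinAt (fun u => K u i j) (((2:ℝ) • (K t * α (deriv y (2*t-1)))) i j)
        (Set.Icc (0:ℝ) 1) t) :
    K 1 = F 1 * G 1 := by
  have hderiv {H : ℝ → Matrix (Fin n) (Fin n) ℝ} {H' : Matrix (Fin n) (Fin n) ℝ}
      {t : ℝ} (ht : t ∈ Ioo 0 1)
      (h : ∀ i j, HasDerivWithinAt (fun u => H u i j) (H' i j) (Icc 0 1) t) : HasDerivAt H H' t :=
    (Matrix.hasDerivWithinAt_iff.2 h).hasDerivAt (Icc_mem_nhds ht.1 ht.2)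
  have hα {z : ℝ → EuclideanSpace ℝ (Fin d)} (hz : ContDiff ℝ 1 z) :
      ContinuousOn (fun t => α (deriv z t)) (Icc 0 1) :=
    (α.continuous_of_finiteDimensional.comp (hz.continuous_deriv le_rfl)).continuousOn
  have first_half : K (1/2) = K 0 * F 1 :=
    Matrix.eq_mul_of_mul_right_ODE_rescaled (c := 0) (by norm_num) (by norm_num) (hα hx)
      (fun t ht => (Matrix.hasDerivWithinAt_iff.2 (hF t ht)).continuousWithinAt)
      (fun t ht => hderiv ht (hF t (Ioo_subset_Icc_self ht))) hF0
      (hKcont.mono (Icc_subset_Icc_right (by norm_num)))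
      (fun t ht => by
        simpa using hderiv ⟨ht.1, by linarith [ht.2]⟩ (hK₁ t (Ioo_subset_Ico_self ht)))
  have second_half : K 1 = K (1/2) * G 1 :=
    Matrix.eq_mul_of_mul_right_ODE_rescaled (c := 1) (by norm_num) (by norm_num) (hα hy)
      (fun t ht => (Matrix.hasDerivWithinAt_iff.2 (hG t ht)).continuousWithinAt)
      (fun t ht => hderiv ht (hG t (Ioo_subset_Icc_self ht))) hG0
      (hKcont.mono (Icc_subset_Icc_left (by norm_num)))
      (fun t ht => hderiv ⟨by linarith [ht.1], ht.2⟩ (hK₂ t (Ioo_subset_Ioc_self ht)))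
  rw [second_half, first_half, hK0, Matrix.one_mul]

/-- Path development is multiplicative under concatenation: if `F`, `G`
are the path developments of `C¹` paths `x`, `y` (with `x(1) = y(0)`) with respect to a
linear connection `α`, and `K` solves the development equation driven by the concatenation
`x ⋆ y` (at double speed on each half, differentiable away from `t = 1/2`), then
`K(1) = F(1)·G(1)`. -/
theorem path_development_concatenation
    (d n : ℕ) (α : EuclideanSpace ℝ (Fin d) →ₗ[ℝ] Matrix (Fin n) (Fin n) ℝ)
    (x y : ℝ → EuclideanSpace ℝ (Fin d))
    (hx : ContDiff ℝ 1 x) (hy : ContDiff ℝ 1 y) (hxy : x 1 = y 0)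
    (F G K : ℝ → Matrix (Fin n) (Fin n) ℝ)
    (hF0 : F 0 = 1) (hG0 : G 0 = 1) (hK0 : K 0 = 1)
    (hF : ∀ t ∈ Set.Icc (0:ℝ) 1, ∀ i j,
      HasDerivWithinAt (fun u => F u i j) ((F t * α (deriv x t)) i j) (Set.Icc (0:ℝ) 1) t)
    (hG : ∀ t ∈ Set.Icc (0:ℝ) 1, ∀ i j,
      HasDerivWithinAt (fun u => G u i j) ((G t * α (deriv y t)) i j) (Set.Icc (0:ℝ) 1) t)
    (hKcont : ContinuousOn K (Set.Icc (0:ℝ) 1))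
    (hK₁ : ∀ t ∈ Set.Ico (0:ℝ) (1/2), ∀ i j,
      HasDerivWithinAt (fun u => K u i j) (((2:ℝ) • (K t * α (deriv x (2*t)))) i j)
        (Set.Icc (0:ℝ) 1) t)
    (hK₂ : ∀ t ∈ Set.Ioc (1/2:ℝ) 1, ∀ i j,
      HasDerivWithinAt (fun u => K u i j) (((2:ℝ) • (K t * α (deriv y (2*t-1)))) i j)
        (Set.Icc (0:ℝ) 1) t) :
    K 1 = F 1 * G 1 :=
  path_development_concatenation_general d n α x y hx hy F G K hF0 hG0 hK0 hF hG hKcont hK₁ hK₂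
end

section
/- Let 1 ≤ p < q < ∞ and let X : [0,1]² → ℝ^d be continuous with finite controlled p-variation |X|_{p;[0,1]²} < ∞. Then for every ε > 0 there exists δ > 0 such that for every rectangle partition π of [0,1]² in which every rectangle has minimum side length at most δ, one has ∑_{r∈π} ‖□_r[X]‖^q ≤ ε. -/
open scoped ENNReal

/-! By uniform continuity, `X` varies by at most `η / 2` across the short side of any box of
small minimum side length, so every such increment has norm at most `η`. Hence
`∑ ‖□‖^q ≤ η^(q-p) ∑ ‖□‖^p ≤ η^(q-p) |X|^p_{p;[0,1]²}`, and `η` is chosen to make this `≤ ε`. -/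

open Filter Topology

theorem exists_pos_ofReal_rpow_mul_le {r : ℝ} (hr : 0 < r) {C : ℝ≥0∞} (hC : C ≠ ⊤)
    {ε : ℝ} (hε : 0 < ε) : ∃ η : ℝ, 0 < η ∧ ENNReal.ofReal η ^ r * C ≤ ENNReal.ofReal ε := by
  have hlim : Tendsto (fun η : ℝ => ENNReal.ofReal η ^ r * C) (𝓝 0) (𝓝 0) := by
    have hpow : Continuous fun η : ℝ => ENNReal.ofReal η ^ r :=
      ENNReal.continuous_rpow_const.comp ENNReal.continuous_ofReal
    have := ENNReal.Tendsto.mul_const (hpow.tendsto 0) (Or.inr hC)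
    simpa [ENNReal.zero_rpow_of_pos hr] using this
  obtain ⟨η, hηε, hηpos⟩ := ((hlim.mono_left (nhdsWithin_le_nhds (s := Set.Ioi 0))).eventually
    (ge_mem_nhds (ENNReal.ofReal_pos.2 hε)) |>.and self_mem_nhdsWithin).exists
  exact ⟨η, hηpos, hηε⟩

theorem ENNReal.rpow_le_rpow_sub_mul_rpow {x b : ℝ≥0∞} {p q : ℝ} (hp : 0 ≤ p) (hpq : p ≤ q)
    (hx : x ≤ b) : x ^ q ≤ b ^ (q - p) * x ^ p := by
  calc x ^ q = x ^ (q - p) * x ^ p := by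
        rw [← ENNReal.rpow_add_of_nonneg _ _ (sub_nonneg.2 hpq) hp, sub_add_cancel]
    _ ≤ b ^ (q - p) * x ^ p := by gcongr

theorem ENNReal.sum_rpow_le_rpow_sub_mul_sum_rpow {ι : Type*} (s : Finset ι) {x : ι → ℝ≥0∞}
    {b : ℝ≥0∞} {p q : ℝ} (hp : 0 ≤ p) (hpq : p ≤ q) (hx : ∀ i ∈ s, x i ≤ b) :
    ∑ i ∈ s, x i ^ q ≤ b ^ (q - p) * ∑ i ∈ s, x i ^ p := by
  rw [Finset.mul_sum]
  exact Finset.sum_le_sum fun i hi => ENNReal.rpow_le_rpow_sub_mul_rpow hp hpq (hx i hi)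

theorem IsRectPartition.toSet_subset {R : Rect} {K : ℕ} {π : Fin K → Rect}
    (hπ : IsRectPartition R π) (i : Fin K) : (π i).toSet ⊆ R.toSet :=
  hπ.2.2 ▸ Set.subset_iUnion (fun j => (π j).toSet) i

theorem sum_rpow_le_cVarPow {E : Type*} [NormedAddCommGroup E] (p : ℝ) (X : ℝ → ℝ → E)
    {R : Rect} {K : ℕ} {π : Fin K → Rect} (hπ : IsRectPartition R π) :
    ∑ i, (‖boxInc X (π i)‖₊ : ℝ≥0∞) ^ p ≤ cVarPow p X R :=
  le_iSup_of_le K <| le_iSup_of_le π <| le_iSup_of_le hπ le_rfl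

section boxInc

variable {E : Type*} [NormedAddCommGroup E] (X : ℝ → ℝ → E) (r : Rect)

theorem boxInc_eq_bottom_sub_top :
    boxInc X r = (X r.s r.t - X r.s' r.t) - (X r.s r.t' - X r.s' r.t') := by
  simp only [boxInc]; abel

theorem boxInc_eq_left_sub_right :
    boxInc X r = (X r.s r.t - X r.s r.t') - (X r.s' r.t - X r.s' r.t') := by
  simp only [boxInc]; abel

variable {X r}

theorem norm_boxInc_le_of_dist_le {δ η : ℝ} (hδ : 0 ≤ δ) (hs : r.s ≤ r.s') (ht : r.t ≤ r.t')
    (hmin : min (r.s' - r.s) (r.t' - r.t) ≤ δ)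
    (hX : ∀ z ∈ r.toSet, ∀ w ∈ r.toSet, dist z w ≤ δ → dist (X z.1 z.2) (X w.1 w.2) ≤ η) :
    ‖boxInc X r‖ ≤ 2 * η := by
  have hS : r.s ∈ Set.Icc r.s r.s' := Set.left_mem_Icc.2 hs
  have hS' : r.s' ∈ Set.Icc r.s r.s' := Set.right_mem_Icc.2 hs
  have hT : r.t ∈ Set.Icc r.t r.t' := Set.left_mem_Icc.2 ht
  have hT' : r.t' ∈ Set.Icc r.t r.t' := Set.right_mem_Icc.2 ht
  rcases min_le_iff.1 hmin with hside | hside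
  · have hstep : ∀ v ∈ Set.Icc r.t r.t', ‖X r.s v - X r.s' v‖ ≤ η := fun v hv => by
      rw [← dist_eq_norm]
      refine hX (r.s, v) ⟨hS, hv⟩ (r.s', v) ⟨hS', hv⟩ ?_
      simp [Prod.dist_eq, Real.dist_eq, abs_of_nonpos (sub_nonpos.2 hs), hδ, hside]
    rw [boxInc_eq_bottom_sub_top]
    linarith [norm_sub_le (X r.s r.t - X r.s' r.t) (X r.s r.t' - X r.s' r.t'),
      hstep _ hT, hstep _ hT']
  · have hstep : ∀ u ∈ Set.Icc r.s r.s', ‖X u r.t - X u r.t'‖ ≤ η := fun u hu => by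
      rw [← dist_eq_norm]
      refine hX (u, r.t) ⟨hu, hT⟩ (u, r.t') ⟨hu, hT'⟩ ?_
      simp [Prod.dist_eq, Real.dist_eq, abs_of_nonpos (sub_nonpos.2 ht), hδ, hside]
    rw [boxInc_eq_left_sub_right]
    linarith [norm_sub_le (X r.s r.t - X r.s r.t') (X r.s' r.t - X r.s' r.t'),
      hstep _ hS, hstep _ hS']

end boxInc

/-- If `1 ≤ p < q` and `X : [0,1]² → ℝ^d` is continuous with finite
controlled `p`-variation, then for every `ε > 0` there is `δ > 0` such that every rectangle
partition of `[0,1]²` all of whose rectangles have minimum side length at most `δ` has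
`q`-power increment sum at most `ε`. -/
theorem small_mesh_q_variation_small
    (d : ℕ) (p q : ℝ) (hp : 1 ≤ p) (hpq : p < q)
    (X : ℝ → ℝ → EuclideanSpace ℝ (Fin d))
    (hcont : ContinuousOn (fun z : ℝ × ℝ => X z.1 z.2) (Set.Icc 0 1 ×ˢ Set.Icc 0 1))
    (hfin : cVarPow p X unitRect ≠ ⊤) :
    ∀ ε : ℝ, 0 < ε → ∃ δ : ℝ, 0 < δ ∧
      ∀ (K : ℕ) (π : Fin K → Rect), IsRectPartition unitRect π →
        (∀ i, min ((π i).s' - (π i).s) ((π i).t' - (π i).t) ≤ δ) →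
        ∑ i, (‖boxInc X (π i)‖₊ : ℝ≥0∞) ^ q ≤ ENNReal.ofReal ε := by
  intro ε hε
  obtain ⟨η, hη, hηε⟩ := exists_pos_ofReal_rpow_mul_le (sub_pos.2 hpq) hfin hε
  obtain ⟨δ, hδ, hunif⟩ := Metric.uniformContinuousOn_iff_le.1
    ((isCompact_Icc.prod isCompact_Icc).uniformContinuousOn_of_continuous hcont) (η / 2)
    (half_pos hη)
  refine ⟨δ, hδ, fun K π hπ hmesh => ?_⟩
  have hbox : ∀ i ∈ Finset.univ, (‖boxInc X (π i)‖₊ : ℝ≥0∞) ≤ ENNReal.ofReal η := by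
    intro i _
    have hsub := hπ.toSet_subset i
    rw [← ENNReal.ofReal_coe_nnreal, coe_nnnorm]
    exact ENNReal.ofReal_le_ofReal ((norm_boxInc_le_of_dist_le hδ.le (hπ.1 i).1 (hπ.1 i).2
      (hmesh i) fun z hz w hw => hunif z (hsub hz) w (hsub hw)).trans_eq
      (mul_div_cancel₀ η two_ne_zero))
  calc ∑ i, (‖boxInc X (π i)‖₊ : ℝ≥0∞) ^ q
      ≤ ENNReal.ofReal η ^ (q - p) * ∑ i, (‖boxInc X (π i)‖₊ : ℝ≥0∞) ^ p :=
        ENNReal.sum_rpow_le_rpow_sub_mul_sum_rpow _ (by linarith) hpq.le hbox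
    _ ≤ ENNReal.ofReal η ^ (q - p) * cVarPow p X unitRect := by
        gcongr; exact sum_rpow_le_cVarPow p X hπ
    _ ≤ ENNReal.ofReal ε := hηε
end
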